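/- arXiv:1405.6157 — 11 statements merged into one kernel-verified Lean document; each statement's English description precedes it below -/
import Mathlib

section
/- Let (P,G,B) be a transversal design TD(2,α) with α > 2, and let 1 ≤ k ≤ 2α. Then the minimum, taken over all k-element subsets S of the point set P, of the number of blocks of B that contain at least one point of S, equals kα − ⌊k²/4⌋. -/
/-- A transversal design `TD(ℓ, h)`: `Gr` is a partition of the point set `P`
(of size `ℓh`) into `ℓ` groups of size `h`; `B` is a collection of blocks,
each an `ℓ`-subset of `P` meeting every group in exactly one point, such that
any pair of points from different groups lies in exactly one block. -/
structure IsTransversalDesign {P : Type*} [Fintype P] [DecidableEq P]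
    (ℓ h : ℕ) (Gr : Finset (Finset P)) (B : Finset (Finset P)) : Prop where
  card_points : Fintype.card P = ℓ * h
  card_groups : Gr.card = ℓ
  group_card : ∀ g ∈ Gr, g.card = h
  groups_disjoint : ∀ g₁ ∈ Gr, ∀ g₂ ∈ Gr, g₁ ≠ g₂ → Disjoint g₁ g₂
  groups_cover : ∀ p : P, ∃ g ∈ Gr, p ∈ g
  block_card : ∀ b ∈ B, b.card = ℓ
  block_meets_group : ∀ b ∈ B, ∀ g ∈ Gr, (b ∩ g).card = 1
  pairs_covered : ∀ p q : P, ∀ g₁ ∈ Gr, ∀ g₂ ∈ Gr, g₁ ≠ g₂ → p ∈ g₁ → q ∈ g₂ →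
    ∃! b, b ∈ B ∧ p ∈ b ∧ q ∈ b

/-!
With only two groups `g₁, g₂`, every block is a pair `{x, y}` with `x ∈ g₁`, `y ∈ g₂`, and every
such pair is a block, so the blocks missing `S` correspond to `(g₁ \ S) × (g₂ \ S)`. If `S` has
`a` points in `g₁` and `b` in `g₂`, the blocks meeting `S` number `α² - (α - a)(α - b) = kα - ab`,
and `ab ≤ ⌊k²/4⌋` with equality for the balanced split `a = ⌊k/2⌋`.
-/

theorem Nat.mul_le_sq_add_div_four (a b : ℕ) : a * b ≤ (a + b) ^ 2 / 4 :=
  (Nat.le_div_iff_mul_le four_pos).2 <| by linarith [four_mul_le_sq_add a b]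

theorem Nat.div_two_mul_sub_div_two (k : ℕ) : k / 2 * (k - k / 2) = k ^ 2 / 4 := by
  obtain ⟨t, rfl | rfl⟩ := Nat.even_or_odd' k
  · rw [Nat.mul_div_cancel_left t two_pos, show 2 * t - t = t by omega,
      show (2 * t) ^ 2 = t * t * 4 by ring, Nat.mul_div_cancel _ four_pos]
  · rw [show (2 * t + 1) / 2 = t by omega, show 2 * t + 1 - t = t + 1 by omega,
      show (2 * t + 1) ^ 2 = 1 + t * (t + 1) * 4 by ring, Nat.add_mul_div_right _ _ four_pos]
    simp

theorem Nat.mul_self_sub_mul_sub {a b h : ℕ} (ha : a ≤ h) (hb : b ≤ h) :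
    h * h - (h - a) * (h - b) = (a + b) * h - a * b := by
  have hab : a * b ≤ (a + b) * h := by nlinarith
  have hle : (h - a) * (h - b) ≤ h * h := Nat.mul_le_mul (Nat.sub_le h a) (Nat.sub_le h b)
  zify [ha, hb, hab, hle]
  ring

open Finset

theorem Finset.injOn_pair_of_disjoint {α : Type*} [DecidableEq α] {s t : Finset α}
    (hst : Disjoint s t) :
    Set.InjOn (fun xy : α × α => ({xy.1, xy.2} : Finset α)) ↑(s ×ˢ t) := by
  rintro ⟨x, y⟩ hxy ⟨x', y'⟩ hxy' heq
  simp only [mem_coe, mem_product] at hxy hxy' heq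
  have hx : x ∈ ({x', y'} : Finset α) := heq ▸ mem_insert_self x {y}
  have hy : y ∈ ({x', y'} : Finset α) := heq ▸ mem_insert_of_mem (mem_singleton_self y)
  simp only [mem_insert, mem_singleton] at hx hy
  have hxy'' : x ≠ y' := fun h => disjoint_left.mp hst hxy.1 (h ▸ hxy'.2)
  have hyx' : y ≠ x' := fun h => disjoint_left.mp hst hxy'.1 (h ▸ hxy.2)
  rw [hx.resolve_right hxy'', hy.resolve_left hyx']

theorem Finset.union_inter_eq_left_of_disjoint {α : Type*} [DecidableEq α] {s t u v : Finset α}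
    (hs : s ⊆ u) (ht : t ⊆ v) (huv : Disjoint u v) : (s ∪ t) ∩ u = s := by
  rw [union_inter_distrib_right, inter_eq_left.2 hs,
    disjoint_iff_inter_eq_empty.1 (huv.symm.mono_left ht), union_empty]

namespace IsTransversalDesign

variable {P : Type*} [Fintype P] [DecidableEq P] {h : ℕ} {Gr B : Finset (Finset P)}
  {g₁ g₂ : Finset P}

theorem eq_pair_of_mem (hTD : IsTransversalDesign 2 h Gr B) {b : Finset P} (hb : b ∈ B)
    {x y : P} (hxy : x ≠ y) (hx : x ∈ b) (hy : y ∈ b) : b = {x, y} :=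
  (eq_of_subset_of_card_le (insert_subset hx (singleton_subset_iff.2 hy))
    (by rw [hTD.block_card b hb, card_pair hxy])).symm

theorem blocks_eq_image_pair (hTD : IsTransversalDesign 2 h Gr B) (hg₁ : g₁ ∈ Gr)
    (hg₂ : g₂ ∈ Gr) (hne : g₁ ≠ g₂) :
    B = (g₁ ×ˢ g₂).image fun xy => {xy.1, xy.2} := by
  have hdisj := hTD.groups_disjoint g₁ hg₁ g₂ hg₂ hne
  have hne_of_mem : ∀ {x y}, x ∈ g₁ → y ∈ g₂ → x ≠ y :=
    fun hx hy hxy => disjoint_left.mp hdisj hx (hxy ▸ hy)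
  ext b
  simp only [mem_image, mem_product, Prod.exists]
  constructor
  · intro hb
    obtain ⟨x, hx⟩ := card_eq_one.mp (hTD.block_meets_group b hb g₁ hg₁)
    obtain ⟨y, hy⟩ := card_eq_one.mp (hTD.block_meets_group b hb g₂ hg₂)
    obtain ⟨hxb, hxg⟩ := mem_inter.mp (hx ▸ mem_singleton_self x)
    obtain ⟨hyb, hyg⟩ := mem_inter.mp (hy ▸ mem_singleton_self y)
    exact ⟨x, y, ⟨hxg, hyg⟩, (hTD.eq_pair_of_mem hb (hne_of_mem hxg hyg) hxb hyb).symm⟩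
  · rintro ⟨x, y, ⟨hx, hy⟩, rfl⟩
    obtain ⟨b, ⟨hb, hxb, hyb⟩, -⟩ := hTD.pairs_covered x y g₁ hg₁ g₂ hg₂ hne hx hy
    rwa [← hTD.eq_pair_of_mem hb (hne_of_mem hx hy) hxb hyb]

theorem card_filter_meets_eq_sub (hTD : IsTransversalDesign 2 h Gr B) (hg₁ : g₁ ∈ Gr)
    (hg₂ : g₂ ∈ Gr) (hne : g₁ ≠ g₂) (S : Finset P) :
    (B.filter fun b => ∃ p ∈ S, p ∈ b).card = h * h - (g₁ \ S).card * (g₂ \ S).card := by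
  have hdisj := hTD.groups_disjoint g₁ hg₁ g₂ hg₂ hne
  have hmeets : (g₁ ×ˢ g₂).filter (fun xy => ∃ p ∈ S, p ∈ ({xy.1, xy.2} : Finset P)) =
      g₁ ×ˢ g₂ \ (g₁ \ S) ×ˢ (g₂ \ S) := by
    ext ⟨x, y⟩
    simp only [mem_filter, mem_product, mem_sdiff, mem_insert, mem_singleton]
    grind
  rw [hTD.blocks_eq_image_pair hg₁ hg₂ hne, filter_image,
    card_image_of_injOn ((injOn_pair_of_disjoint hdisj).mono (coe_subset.2 (filter_subset _ _))),
    hmeets,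
    card_sdiff_of_subset (product_subset_product sdiff_subset sdiff_subset), card_product,
    card_product, hTD.group_card g₁ hg₁, hTD.group_card g₂ hg₂]

theorem card_inter_add_card_inter (hTD : IsTransversalDesign 2 h Gr B) (hGr : Gr = {g₁, g₂})
    (hne : g₁ ≠ g₂) (S : Finset P) : (S ∩ g₁).card + (S ∩ g₂).card = S.card := by
  have hcover : g₁ ∪ g₂ = univ := eq_univ_of_forall fun p => by
    obtain ⟨g, hg, hpg⟩ := hTD.groups_cover p
    rw [hGr, mem_insert, mem_singleton] at hg
    rcases hg with rfl | rfl <;> simp [hpg]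
  have hdisj := hTD.groups_disjoint g₁ (by simp [hGr]) g₂ (by simp [hGr]) hne
  rw [← card_union_of_disjoint (hdisj.mono inter_subset_right inter_subset_right),
    ← inter_union_distrib_left, hcover, inter_univ]

theorem card_filter_meets_eq (hTD : IsTransversalDesign 2 h Gr B) (hGr : Gr = {g₁, g₂})
    (hne : g₁ ≠ g₂) (S : Finset P) :
    (B.filter fun b => ∃ p ∈ S, p ∈ b).card = S.card * h - (S ∩ g₁).card * (S ∩ g₂).card := by
  have hg₁ : g₁ ∈ Gr := by simp [hGr]
  have hg₂ : g₂ ∈ Gr := by simp [hGr]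
  have hle : ∀ g ∈ Gr, (S ∩ g).card ≤ h := fun g hg =>
    hTD.group_card g hg ▸ card_le_card inter_subset_right
  rw [hTD.card_filter_meets_eq_sub hg₁ hg₂ hne, card_sdiff, card_sdiff,
    hTD.group_card g₁ hg₁, hTD.group_card g₂ hg₂,
    Nat.mul_self_sub_mul_sub (hle g₁ hg₁) (hle g₂ hg₂), hTD.card_inter_add_card_inter hGr hne]

end IsTransversalDesign

theorem td2_min_file_size_general {P : Type*} [Fintype P] [DecidableEq P]
    (α : ℕ) (Gr B : Finset (Finset P))
    (hTD : IsTransversalDesign 2 α Gr B)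
    (k : ℕ) (hk2 : k ≤ 2 * α) :
    IsLeast {m : ℕ | ∃ S : Finset P, S.card = k ∧
        m = (B.filter (fun b => ∃ p ∈ S, p ∈ b)).card}
      (k * α - k ^ 2 / 4) := by
  obtain ⟨g₁, g₂, hne, hGr⟩ := card_eq_two.mp hTD.card_groups
  have hg₁ : g₁ ∈ Gr := by simp [hGr]
  have hg₂ : g₂ ∈ Gr := by simp [hGr]
  refine ⟨?_, ?_⟩
  · obtain ⟨T₁, hT₁, hcard₁⟩ := exists_subset_card_eq (s := g₁) (n := k / 2)
      (by rw [hTD.group_card g₁ hg₁]; omega)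
    obtain ⟨T₂, hT₂, hcard₂⟩ := exists_subset_card_eq (s := g₂) (n := k - k / 2)
      (by rw [hTD.group_card g₂ hg₂]; omega)
    have hdisj := hTD.groups_disjoint g₁ hg₁ g₂ hg₂ hne
    have hcard : (T₁ ∪ T₂).card = k := by
      rw [card_union_of_disjoint (hdisj.mono hT₁ hT₂)]
      omega
    refine ⟨T₁ ∪ T₂, hcard, ?_⟩
    rw [hTD.card_filter_meets_eq hGr hne, hcard, union_inter_eq_left_of_disjoint hT₁ hT₂ hdisj,
      union_comm, union_inter_eq_left_of_disjoint hT₂ hT₁ hdisj.symm, hcard₁, hcard₂,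
      Nat.div_two_mul_sub_div_two]
  · rintro _ ⟨S, rfl, rfl⟩
    rw [hTD.card_filter_meets_eq hGr hne, ← hTD.card_inter_add_card_inter hGr hne S]
    exact Nat.sub_le_sub_left (Nat.mul_le_sq_add_div_four _ _) _

/-- For a `TD(2,α)` with `α > 2` and `1 ≤ k ≤ 2α`, the minimum over all
`k`-subsets `S` of points of the number of blocks meeting `S`
equals `kα - ⌊k²/4⌋`. -/
theorem td2_min_file_size {P : Type*} [Fintype P] [DecidableEq P]
    (α : ℕ) (hα : 2 < α) (Gr B : Finset (Finset P))
    (hTD : IsTransversalDesign 2 α Gr B)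
    (k : ℕ) (hk1 : 1 ≤ k) (hk2 : k ≤ 2 * α) :
    IsLeast {m : ℕ | ∃ S : Finset P, S.card = k ∧
        m = (B.filter (fun b => ∃ p ∈ S, p ∈ b)).card}
      (k * α - k ^ 2 / 4) :=
  td2_min_file_size_general α Gr B hTD k hk2
end

section
/- Let (P,G,B) be a transversal design TD(2,α) with α > 2. Then for every 1 ≤ i ≤ 5 and every set of i distinct blocks of B, the union of these blocks contains at least i points. -/
open Finset

theorem Nat.mul_le_add_of_add_le_four {a c : ℕ} (h : a + c ≤ 4) : a * c ≤ a + c := by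
  rcases a with _ | _ | a <;> rcases c with _ | _ | c <;> nlinarith

theorem Finset.card_le_mul_card_of_forall_eq_pair {P : Type*} [DecidableEq P]
    {S : Finset (Finset P)} {X Y : Finset P} (hS : ∀ b ∈ S, ∃ x ∈ X, ∃ y ∈ Y, b = {x, y}) :
    #S ≤ #X * #Y := by
  have hsub : S ⊆ (X ×ˢ Y).image fun xy => {xy.1, xy.2} := by
    intro b hb
    obtain ⟨x, hx, y, hy, rfl⟩ := hS b hb
    exact mem_image.mpr ⟨(x, y), mem_product.mpr ⟨hx, hy⟩, rfl⟩
  calc #S ≤ #((X ×ˢ Y).image fun xy => ({xy.1, xy.2} : Finset P)) := card_le_card hsub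
    _ ≤ #(X ×ˢ Y) := card_image_le
    _ = #X * #Y := card_product X Y

theorem Finset.card_inter_add_card_inter_le {P : Type*} [DecidableEq P] {U X Y : Finset P}
    (h : Disjoint X Y) : #(U ∩ X) + #(U ∩ Y) ≤ #U := by
  rw [← card_union_of_disjoint (h.mono inter_subset_right inter_subset_right)]
  exact card_le_card (union_subset inter_subset_left inter_subset_left)

theorem IsTransversalDesign.exists_eq_pair {P : Type*} [Fintype P] [DecidableEq P] {h : ℕ}
    {Gr B : Finset (Finset P)} (hTD : IsTransversalDesign 2 h Gr B) {g₁ g₂ : Finset P}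
    (hg₁ : g₁ ∈ Gr) (hg₂ : g₂ ∈ Gr) (hne : g₁ ≠ g₂) {b : Finset P} (hb : b ∈ B) :
    ∃ x ∈ b ∩ g₁, ∃ y ∈ b ∩ g₂, b = {x, y} := by
  obtain ⟨x, hx⟩ := card_eq_one.mp (hTD.block_meets_group b hb g₁ hg₁)
  obtain ⟨y, hy⟩ := card_eq_one.mp (hTD.block_meets_group b hb g₂ hg₂)
  have hxb : x ∈ b ∩ g₁ := hx ▸ mem_singleton_self x
  have hyb : y ∈ b ∩ g₂ := hy ▸ mem_singleton_self y
  have hxy : x ≠ y := fun hxy =>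
    disjoint_left.mp (hTD.groups_disjoint g₁ hg₁ g₂ hg₂ hne) (mem_inter.mp hxb).2
      (hxy ▸ (mem_inter.mp hyb).2)
  refine ⟨x, hxb, y, hyb, (eq_of_subset_of_card_le ?_ ?_).symm⟩
  · exact insert_subset (mem_inter.mp hxb).1 (singleton_subset_iff.mpr (mem_inter.mp hyb).1)
  · rw [hTD.block_card b hb, card_pair hxy]

theorem td2_hall_five_general {P : Type*} [Fintype P] [DecidableEq P]
    (α : ℕ) (Gr B : Finset (Finset P))
    (hTD : IsTransversalDesign 2 α Gr B) :
    ∀ S : Finset (Finset P), S ⊆ B → 1 ≤ S.card → S.card ≤ 5 →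
      S.card ≤ (S.sup id).card := by
  intro S hSB _ h5
  obtain ⟨g₁, g₂, hne, hGr⟩ := card_eq_two.mp hTD.card_groups
  have hg₁ : g₁ ∈ Gr := by simp [hGr]
  have hg₂ : g₂ ∈ Gr := by simp [hGr]
  set U := S.sup id
  have hprod : #S ≤ #(U ∩ g₁) * #(U ∩ g₂) := by
    refine card_le_mul_card_of_forall_eq_pair fun b hb => ?_
    have hbU : b ⊆ U := le_sup (f := id) hb
    obtain ⟨x, hx, y, hy, rfl⟩ := hTD.exists_eq_pair hg₁ hg₂ hne (hSB hb)
    exact ⟨x, inter_subset_inter_right hbU hx, y, inter_subset_inter_right hbU hy, rfl⟩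
  have hsum : #(U ∩ g₁) + #(U ∩ g₂) ≤ #U :=
    card_inter_add_card_inter_le (hTD.groups_disjoint g₁ hg₁ g₂ hg₂ hne)
  by_contra! hU
  have := Nat.mul_le_add_of_add_le_four (show #(U ∩ g₁) + #(U ∩ g₂) ≤ 4 by omega)
  omega

/-- In a `TD(2,α)` with `α > 2`, any `i` distinct blocks, `1 ≤ i ≤ 5`,
cover at least `i` points (`S.sup id` is the union of the blocks in `S`). -/
theorem td2_hall_five {P : Type*} [Fintype P] [DecidableEq P]
    (α : ℕ) (hα : 2 < α) (Gr B : Finset (Finset P))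
    (hTD : IsTransversalDesign 2 α Gr B) :
    ∀ S : Finset (Finset P), S ⊆ B → 1 ≤ S.card → S.card ≤ 5 →
      S.card ≤ (S.sup id).card :=
  td2_hall_five_general α Gr B hTD
end

section
/- Let (P,G,B) be a resolvable transversal design TD(α−1,α) for a prime power α, and let k be a positive integer with k ≤ α(α−1); write k = x(α−1) + y with x, y nonnegative integers and y ≤ α − 2. Then every k-element subset S of the point set P meets at least kα − C(k,2) + (α−1)·C(x,2) + xy blocks of B, where C(a,2) = a(a−1)/2; that is, the number of blocks containing at least one point of S is at least kα − k(k−1)/2 + (α−1)·x(x−1)/2 + xy. -/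
/-- A transversal design `TD(ℓ, h)` is resolvable if its block set can be
partitioned into `h` parallel classes of `h` blocks each, so that every point
lies in exactly one block of each class. -/
def IsResolvableTransversalDesign {P : Type*} [Fintype P] [DecidableEq P]
    (ℓ h : ℕ) (Gr : Finset (Finset P)) (B : Finset (Finset P)) : Prop :=
  IsTransversalDesign ℓ h Gr B ∧
  ∃ C : Finset (Finset (Finset P)), C.card = h ∧
    (∀ c ∈ C, c.card = h ∧ c ⊆ B) ∧
    (∀ c₁ ∈ C, ∀ c₂ ∈ C, c₁ ≠ c₂ → Disjoint c₁ c₂) ∧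
    C.sup id = B ∧
    (∀ c ∈ C, ∀ p : P, ∃! b, b ∈ c ∧ p ∈ b)

open Finset

theorem Finset.sum_card_inter_sq {α : Type*} [DecidableEq α] (s : Finset α)
    (B : Finset (Finset α)) :
    ∑ t ∈ B, #(s ∩ t) ^ 2 = ∑ p ∈ s, ∑ q ∈ s, #{t ∈ B | p ∈ t ∧ q ∈ t} := by
  calc ∑ t ∈ B, #(s ∩ t) ^ 2
      = ∑ t ∈ B, #((s ×ˢ s).bipartiteBelow (fun pq t => pq.1 ∈ t ∧ pq.2 ∈ t) t) :=
        sum_congr rfl fun t _ => by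
          rw [bipartiteBelow, filter_product, card_product, filter_mem_eq_inter, sq]
    _ = ∑ pq ∈ s ×ˢ s, #(B.bipartiteAbove (fun pq t => pq.1 ∈ t ∧ pq.2 ∈ t) pq) :=
        (sum_card_bipartiteAbove_eq_sum_card_bipartiteBelow _).symm
    _ = _ := sum_product' _ _ fun p q => #{t ∈ B | p ∈ t ∧ q ∈ t}

theorem Nat.three_mul_le_sq_add_two (n : ℕ) : 3 * n ≤ n ^ 2 + 2 := by
  rcases n with _ | _ | n <;> nlinarith

theorem Int.two_mul_add_one_mul_le (m x : ℤ) : (2 * x + 1) * m ≤ m ^ 2 + x * (x + 1) := by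
  have : 0 ≤ (m - x) * (m - x - 1) := by
    rcases le_or_gt (m - x) 0 with h | h <;> nlinarith
  nlinarith

namespace IsTransversalDesign

variable {P : Type*} [Fintype P] [DecidableEq P] {ℓ h : ℕ} {Gr B : Finset (Finset P)}

theorem existsUnique_group (hT : IsTransversalDesign ℓ h Gr B) (p : P) :
    ∃! g, g ∈ Gr ∧ p ∈ g := by
  obtain ⟨g, hg, hpg⟩ := hT.groups_cover p
  refine ⟨g, ⟨hg, hpg⟩, fun g' ⟨hg', hpg'⟩ => ?_⟩
  by_contra hne
  exact disjoint_left.mp (hT.groups_disjoint g' hg' g hg hne) hpg' hpg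

theorem card_groups_containing (hT : IsTransversalDesign ℓ h Gr B) (p : P) :
    #{g ∈ Gr | p ∈ g} = 1 := by
  simpa [card_eq_one_iff_existsUnique] using hT.existsUnique_group p

theorem eq_of_mem_block_of_mem_group (hT : IsTransversalDesign ℓ h Gr B) {b g : Finset P}
    (hb : b ∈ B) (hg : g ∈ Gr) {p q : P} (hpb : p ∈ b) (hqb : q ∈ b) (hpg : p ∈ g)
    (hqg : q ∈ g) : p = q :=
  card_le_one.mp (hT.block_meets_group b hb g hg).le p (mem_inter.mpr ⟨hpb, hpg⟩) q
    (mem_inter.mpr ⟨hqb, hqg⟩)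

theorem card_blocks_pair_add_card_groups_pair (hT : IsTransversalDesign ℓ h Gr B) {p q : P}
    (hpq : p ≠ q) : #{b ∈ B | p ∈ b ∧ q ∈ b} + #{g ∈ Gr | p ∈ g ∧ q ∈ g} = 1 := by
  obtain ⟨g₁, ⟨hg₁, hpg₁⟩, hu₁⟩ := hT.existsUnique_group p
  by_cases hqg₁ : q ∈ g₁
  · have hblocks : #{b ∈ B | p ∈ b ∧ q ∈ b} = 0 := by
      rw [card_eq_zero, filter_eq_empty_iff]
      exact fun b hb ⟨hpb, hqb⟩ => hpq (hT.eq_of_mem_block_of_mem_group hb hg₁ hpb hqb hpg₁ hqg₁)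
    have hgroups : #{g ∈ Gr | p ∈ g ∧ q ∈ g} = 1 := by
      rw [card_eq_one_iff_existsUnique]
      refine ⟨g₁, mem_filter.mpr ⟨hg₁, hpg₁, hqg₁⟩, fun g hg => ?_⟩
      obtain ⟨hg, hpg, -⟩ := mem_filter.mp hg
      exact hu₁ g ⟨hg, hpg⟩
    rw [hblocks, hgroups]
  · obtain ⟨g₂, ⟨hg₂, hqg₂⟩, hu₂⟩ := hT.existsUnique_group q
    have hne : g₁ ≠ g₂ := fun h => hqg₁ (h ▸ hqg₂)
    have hblocks : #{b ∈ B | p ∈ b ∧ q ∈ b} = 1 := by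
      simpa [card_eq_one_iff_existsUnique] using
        hT.pairs_covered p q g₁ hg₁ g₂ hg₂ hne hpg₁ hqg₂
    have hgroups : #{g ∈ Gr | p ∈ g ∧ q ∈ g} = 0 := by
      rw [card_eq_zero, filter_eq_empty_iff]
      exact fun g hg ⟨hpg, hqg⟩ => hne ((hu₁ g ⟨hg, hpg⟩).symm.trans (hu₂ g ⟨hg, hqg⟩))
    rw [hblocks, hgroups]

theorem sum_sq_card_inter_blocks_add_groups (hT : IsTransversalDesign ℓ h Gr B) {r : ℕ}
    (hr : ∀ p, #{b ∈ B | p ∈ b} = r) (S : Finset P) :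
    ∑ b ∈ B, #(S ∩ b) ^ 2 + ∑ g ∈ Gr, #(S ∩ g) ^ 2 = #S * r + #S ^ 2 := by
  have hpair : ∀ p q : P, #{b ∈ B | p ∈ b ∧ q ∈ b} + #{g ∈ Gr | p ∈ g ∧ q ∈ g}
      = (if p = q then r else 0) + 1 := by
    intro p q
    split_ifs with hpq
    · simp [hpq, hr, hT.card_groups_containing]
    · simpa using hT.card_blocks_pair_add_card_groups_pair hpq
  simp_rw [sum_card_inter_sq, ← sum_add_distrib, hpair, sum_add_distrib, sum_ite_eq]
  simp [sum_ite_mem, sq, mul_comm]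

theorem le_two_mul_card_blocks_meeting (hT : IsTransversalDesign ℓ h Gr B) {r : ℕ}
    (hr : ∀ p, #{b ∈ B | p ∈ b} = r) (S : Finset P) (x : ℤ) :
    2 * #S * r - #S ^ 2 + (2 * x + 1) * #S - ℓ * (x * (x + 1))
      ≤ 2 * (#{b ∈ B | ∃ p ∈ S, p ∈ b} : ℤ) := by
  have hsum_blocks : ∑ b ∈ B, #(S ∩ b) = #S * r := sum_card_inter fun p _ => hr p
  have hsum_groups : ∑ g ∈ Gr, #(S ∩ g) = #S * 1 :=
    sum_card_inter fun p _ => hT.card_groups_containing p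
  have hsq := hT.sum_sq_card_inter_blocks_add_groups hr S
  have hblocks : 3 * ∑ b ∈ B, #(S ∩ b) ≤ ∑ b ∈ B, #(S ∩ b) ^ 2
      + 2 * #{b ∈ B | ∃ p ∈ S, p ∈ b} := by
    rw [mul_sum, card_filter, mul_sum, ← sum_add_distrib]
    refine sum_le_sum fun b _ => ?_
    split_ifs with hb
    · simpa using Nat.three_mul_le_sq_add_two #(S ∩ b)
    · have hSb : S ∩ b = ∅ :=
        disjoint_iff_inter_eq_empty.mp (disjoint_left.mpr fun p hp hpb => hb ⟨p, hp, hpb⟩)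
      simp [hSb]
  have hgroups : ∑ g ∈ Gr, (2 * x + 1) * (#(S ∩ g) : ℤ)
      ≤ ∑ g ∈ Gr, ((#(S ∩ g) : ℤ) ^ 2 + x * (x + 1)) :=
    sum_le_sum fun g _ => Int.two_mul_add_one_mul_le _ x
  rw [← mul_sum, sum_add_distrib, sum_const, hT.card_groups, nsmul_eq_mul] at hgroups
  zify at hsum_blocks hsum_groups hsq hblocks
  rw [hsum_groups] at hgroups
  linarith

end IsTransversalDesign

theorem IsResolvableTransversalDesign.card_blocks_containing {P : Type*} [Fintype P]
    [DecidableEq P] {ℓ h : ℕ} {Gr B : Finset (Finset P)}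
    (hR : IsResolvableTransversalDesign ℓ h Gr B) (p : P) : #{b ∈ B | p ∈ b} = h := by
  obtain ⟨-, C, hCcard, -, hCdisj, hCsup, hCpoint⟩ := hR
  rw [← hCsup, sup_eq_biUnion, filter_biUnion, card_biUnion (t := fun c => {b ∈ id c | p ∈ b})
    fun c₁ h₁ c₂ h₂ hne => disjoint_filter_filter (hCdisj c₁ h₁ c₂ h₂ hne)]
  calc ∑ c ∈ C, #{b ∈ id c | p ∈ b} = ∑ c ∈ C, 1 := sum_congr rfl fun c hc => by
        simpa [card_eq_one_iff_existsUnique] using hCpoint c hc p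
    _ = h := by simp [hCcard]

theorem resolvable_td_file_size_bound_general {P : Type*} [Fintype P] [DecidableEq P]
    (α : ℕ) (hα : IsPrimePow α) (Gr B : Finset (Finset P))
    (hTD : IsResolvableTransversalDesign (α - 1) α Gr B)
    (k x y : ℕ)
    (hxy : k = x * (α - 1) + y) :
    ∀ S : Finset P, S.card = k →
      (k : ℤ) * α - (k : ℤ) * ((k : ℤ) - 1) / 2
          + ((α : ℤ) - 1) * ((x : ℤ) * ((x : ℤ) - 1) / 2) + (x : ℤ) * (y : ℤ)
        ≤ ((B.filter (fun b => ∃ p ∈ S, p ∈ b)).card : ℤ) := by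
  intro S hS
  have key := hTD.1.le_two_mul_card_blocks_meeting hTD.card_blocks_containing S x
  have hα1 : 1 ≤ α := hα.one_lt.le
  rw [hS] at key
  zify [hα1] at hxy key
  have hDk : 2 * ((k : ℤ) * ((k : ℤ) - 1) / 2) = (k : ℤ) * ((k : ℤ) - 1) :=
    Int.two_mul_ediv_two_of_even (Int.even_mul_pred_self _)
  have hDx : 2 * ((x : ℤ) * ((x : ℤ) - 1) / 2) = (x : ℤ) * ((x : ℤ) - 1) :=
    Int.two_mul_ediv_two_of_even (Int.even_mul_pred_self _)
  linarith [congrArg (((α : ℤ) - 1) * ·) hDx, congrArg (2 * (x : ℤ) * ·) hxy]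

/-- For a resolvable `TD(α-1,α)` with `α` a prime power and `k = x(α-1) + y`,
`y ≤ α - 2`, every `k`-subset `S` of points meets at least
`kα - C(k,2) + (α-1)C(x,2) + xy` blocks. -/
theorem resolvable_td_file_size_bound {P : Type*} [Fintype P] [DecidableEq P]
    (α : ℕ) (hα : IsPrimePow α) (Gr B : Finset (Finset P))
    (hTD : IsResolvableTransversalDesign (α - 1) α Gr B)
    (k x y : ℕ) (hk : 0 < k) (hkmax : k ≤ α * (α - 1))
    (hxy : k = x * (α - 1) + y) (hy : y ≤ α - 2) :
    ∀ S : Finset P, S.card = k →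
      (k : ℤ) * α - (k : ℤ) * ((k : ℤ) - 1) / 2
          + ((α : ℤ) - 1) * ((x : ℤ) * ((x : ℤ) - 1) / 2) + (x : ℤ) * (y : ℤ)
        ≤ ((B.filter (fun b => ∃ p ∈ S, p ∈ b)).card : ℤ) :=
  resolvable_td_file_size_bound_general α hα Gr B hTD k x y hxy
end

section
/- Let (P,G,B) be a resolvable transversal design TD(α−1,α) for a prime power α. Then for every 1 ≤ i ≤ α² − α − 1 and every set of i distinct blocks of B, the union of these blocks contains at least i points. -/
/-! Suppose the union `U` of the chosen blocks `S` has `|U| < |S|`, and call a point full when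
every block through it lies in `S`. Every point lies on `α` blocks and every block has `α - 1`
points, so counting incidences gives `|S| (α - 1) ≤ (α - 1) |U| + #full`, hence at least `α - 1`
full points. The blocks through a full point cover every point outside its group; so, as `U` is
not everything, the full points and the uncovered points all lie in one group of size `α`. Then
`(α - 1) + (α (α - 1) - |U|) ≤ α`, i.e. `|U| ≥ α (α - 1) - 1 ≥ |S|`, a contradiction. -/

open Finset

namespace Finset

variable {α : Type*} [DecidableEq α]

theorem sum_card_filter_mem_sup_id (S : Finset (Finset α)) :
    ∑ p ∈ S.sup id, #{b ∈ S | p ∈ b} = ∑ b ∈ S, #b := by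
  have hinter : ∀ b ∈ S, #b = #(S.sup id ∩ b) := fun b hb => by
    have hbU : b ⊆ S.sup id := le_sup (f := id) hb
    rw [inter_eq_right.mpr hbU]
  rw [sum_congr rfl hinter]
  simp_rw [← filter_mem_eq_inter, card_eq_sum_ones, sum_filter]
  exact sum_comm

end Finset

section FullPoints

variable {α : Type*} [DecidableEq α]

def fullPoints (B S : Finset (Finset α)) : Finset α :=
  {p ∈ S.sup id | ∀ b ∈ B, p ∈ b → b ∈ S}

theorem mem_fullPoints {B S : Finset (Finset α)} {p : α} :
    p ∈ fullPoints B S ↔ p ∈ S.sup id ∧ ∀ b ∈ B, p ∈ b → b ∈ S :=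
  mem_filter

theorem sum_card_le_mul_card_sup_add_card_fullPoints {B S : Finset (Finset α)} {r : ℕ}
    (hSB : S ⊆ B) (hB : ∀ p, #{b ∈ B | p ∈ b} = r + 1) :
    ∑ b ∈ S, #b ≤ r * #(S.sup id) + #(fullPoints B S) := by
  rw [← sum_card_filter_mem_sup_id, fullPoints, card_filter, mul_comm, ← smul_eq_mul,
    ← sum_const, ← sum_add_distrib]
  refine sum_le_sum fun p _ => ?_
  have hsub : {b ∈ S | p ∈ b} ⊆ {b ∈ B | p ∈ b} := filter_subset_filter _ hSB
  have hle := card_le_card hsub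
  rw [hB p] at hle
  split_ifs with hfull
  · omega
  · push Not at hfull
    obtain ⟨b, hbB, hpb, hbS⟩ := hfull
    have hlt := card_lt_card ((ssubset_iff_of_subset hsub).mpr
      ⟨b, mem_filter.mpr ⟨hbB, hpb⟩, fun h => hbS (mem_filter.mp h).1⟩)
    rw [hB p] at hlt
    omega

end FullPoints

section TransversalDesign

variable {P : Type*} [Fintype P] [DecidableEq P] {ℓ h : ℕ} {Gr B : Finset (Finset P)}

theorem IsResolvableTransversalDesign.card_filter_mem
    (hR : IsResolvableTransversalDesign ℓ h Gr B) (p : P) : #{b ∈ B | p ∈ b} = h := by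
  obtain ⟨-, C, hC, -, hCdisj, hCsup, hCres⟩ := hR
  have hdisj : (C : Set (Finset (Finset P))).PairwiseDisjoint fun c => {b ∈ id c | p ∈ b} :=
    fun c₁ h₁ c₂ h₂ hne => (hCdisj c₁ h₁ c₂ h₂ hne).mono (filter_subset _ _) (filter_subset _ _)
  rw [← hCsup, sup_eq_biUnion, filter_biUnion, card_biUnion hdisj, ← hC, card_eq_sum_ones]
  refine sum_congr rfl fun c hc => card_eq_one.mpr ?_
  obtain ⟨b, hb, hbu⟩ := hCres c hc p
  exact ⟨b, by ext x; simpa using ⟨fun h => hbu x h, fun h => h ▸ hb⟩⟩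

namespace IsTransversalDesign

variable (hT : IsTransversalDesign ℓ h Gr B)
include hT

theorem eq_of_mem_of_mem {g₁ g₂ : Finset P} (hg₁ : g₁ ∈ Gr) (hg₂ : g₂ ∈ Gr) {p : P}
    (hp₁ : p ∈ g₁) (hp₂ : p ∈ g₂) : g₁ = g₂ := by
  by_contra hne
  exact disjoint_left.mp (hT.groups_disjoint g₁ hg₁ g₂ hg₂ hne) hp₁ hp₂

theorem mem_group_of_notMem_sup {S : Finset (Finset P)} {g : Finset P} (hg : g ∈ Gr)
    {q r : P} (hq : q ∈ g) (hfull : ∀ b ∈ B, q ∈ b → b ∈ S) (hr : r ∉ S.sup id) : r ∈ g := by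
  obtain ⟨g', hg', hrg'⟩ := hT.groups_cover r
  by_contra hrg
  have hne : g ≠ g' := fun h => hrg (h ▸ hrg')
  obtain ⟨b, ⟨hbB, hqb, hrb⟩, -⟩ := hT.pairs_covered q r g hg g' hg' hne hq hrg'
  exact hr (mem_sup.mpr ⟨b, hfull b hbB hqb, hrb⟩)

theorem card_fullPoints_add_card_compl_le {S : Finset (Finset P)}
    (hF : (fullPoints B S).Nonempty) (hU : (S.sup id)ᶜ.Nonempty) :
    #(fullPoints B S) + #(S.sup id)ᶜ ≤ h := by
  obtain ⟨r, hr⟩ := hU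
  obtain ⟨g, hg, hrg⟩ := hT.groups_cover r
  have hFg : fullPoints B S ⊆ g := fun q hq => by
    obtain ⟨g', hg', hqg'⟩ := hT.groups_cover q
    have hrg' := hT.mem_group_of_notMem_sup hg' hqg' (mem_fullPoints.mp hq).2 (mem_compl.mp hr)
    exact hT.eq_of_mem_of_mem hg' hg hrg' hrg ▸ hqg'
  obtain ⟨q, hq⟩ := hF
  have hcompl : (S.sup id)ᶜ ⊆ g := fun r' hr' =>
    hT.mem_group_of_notMem_sup hg (hFg hq) (mem_fullPoints.mp hq).2 (mem_compl.mp hr')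
  have hdisj : Disjoint (fullPoints B S) (S.sup id)ᶜ :=
    disjoint_left.mpr fun p hp => mem_compl.not_left.mpr (mem_fullPoints.mp hp).1
  rw [← card_union_of_disjoint hdisj, ← hT.group_card g hg]
  exact card_le_card (union_subset hFg hcompl)

end IsTransversalDesign

end TransversalDesign

theorem resolvable_td_hall_general {P : Type*} [Fintype P] [DecidableEq P]
    (α : ℕ) (Gr B : Finset (Finset P))
    (hTD : IsResolvableTransversalDesign (α - 1) α Gr B) :
    ∀ S : Finset (Finset P), S ⊆ B → 1 ≤ S.card → S.card ≤ α ^ 2 - α - 1 →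
      S.card ≤ (S.sup id).card := by
  rintro S hSB - hSα
  by_contra! hlt
  obtain ⟨k, rfl⟩ : ∃ k, α = k + 1 := ⟨α - 1, by cases α <;> simp_all⟩
  replace hSα : #S ≤ k * (k + 1) - 1 := by
    have : (k + 1) ^ 2 = k * (k + 1) + (k + 1) := by ring
    omega
  have hk : 0 < k := Nat.pos_of_ne_zero fun h => by subst h; omega
  rw [Nat.add_sub_cancel] at hTD
  have hT := hTD.1
  have hP : Fintype.card P = k * (k + 1) := hT.card_points
  set U := S.sup id
  set F := fullPoints B S
  have hcount : #S * k ≤ k * #U + #F :=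
    (sum_const_nat fun b hb => hT.block_card b (hSB hb)).symm.trans_le
      (sum_card_le_mul_card_sup_add_card_fullPoints hSB hTD.card_filter_mem)
  have hkF : k ≤ #F := by nlinarith [Nat.mul_le_mul_left k hlt]
  have hUc : #U + #Uᶜ = k * (k + 1) := hP ▸ card_add_card_compl U
  have hbound : #F + #Uᶜ ≤ k + 1 := hT.card_fullPoints_add_card_compl_le
    (card_pos.mp (hk.trans_le hkF)) (card_pos.mp (show 0 < #Uᶜ by omega))
  omega

/-- In a resolvable `TD(α-1,α)` with `α` a prime power, any `i` distinct
blocks, `1 ≤ i ≤ α² - α - 1`, cover at least `i` points. -/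
theorem resolvable_td_hall {P : Type*} [Fintype P] [DecidableEq P]
    (α : ℕ) (hα : IsPrimePow α) (Gr B : Finset (Finset P))
    (hTD : IsResolvableTransversalDesign (α - 1) α Gr B) :
    ∀ S : Finset (Finset P), S ⊆ B → 1 ≤ S.card → S.card ≤ α ^ 2 - α - 1 →
      S.card ≤ (S.sup id).card :=
  resolvable_td_hall_general α Gr B hTD
end

section
/- Let (P,G,B) be a transversal design TD(3,α) with α ≥ 7. Then for every 1 ≤ i ≤ 6 and every set of i distinct blocks of B, the union of these blocks contains at least i points. -/
/-!
Two distinct blocks share at most one point: two points in one group cannot both lie on a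
block, and two points in different groups lie on a unique block. Hence one block already
gives `3` points, and by inclusion–exclusion any three distinct blocks of a `TD(3, α)` cover
at least `3 * 3 - 3 = 6` points, which settles `S.card ≤ 3` and `4 ≤ S.card ≤ 6` respectively.
-/

theorem Finset.card_add_card_add_card_le {α : Type*} [DecidableEq α] (a b c : Finset α) :
    a.card + b.card + c.card ≤
      (a ∪ b ∪ c).card + (a ∩ b).card + (a ∩ c).card + (b ∩ c).card := by
  have hab := card_union_add_card_inter a b
  have habc := card_union_add_card_inter (a ∪ b) c
  have hc : ((a ∪ b) ∩ c).card ≤ (a ∩ c).card + (b ∩ c).card := by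
    rw [union_inter_distrib_right]
    exact card_union_le _ _
  omega

namespace IsTransversalDesign

variable {P : Type*} [Fintype P] [DecidableEq P] {ℓ h : ℕ} {Gr B : Finset (Finset P)}

theorem card_inter_le_one (hTD : IsTransversalDesign ℓ h Gr B) {b₁ b₂ : Finset P}
    (hb₁ : b₁ ∈ B) (hb₂ : b₂ ∈ B) (hne : b₁ ≠ b₂) : (b₁ ∩ b₂).card ≤ 1 := by
  rw [Finset.card_le_one]
  intro p hp q hq
  rw [Finset.mem_inter] at hp hq
  obtain ⟨g₁, hg₁, hpg₁⟩ := hTD.groups_cover p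
  obtain ⟨g₂, hg₂, hqg₂⟩ := hTD.groups_cover q
  by_cases hg : g₁ = g₂
  · subst hg
    exact Finset.card_le_one.mp (hTD.block_meets_group b₁ hb₁ g₁ hg₁).le p
      (Finset.mem_inter.mpr ⟨hp.1, hpg₁⟩) q (Finset.mem_inter.mpr ⟨hq.1, hqg₂⟩)
  · obtain ⟨b, -, hunique⟩ := hTD.pairs_covered p q g₁ hg₁ g₂ hg₂ hg hpg₁ hqg₂
    exact absurd ((hunique b₁ ⟨hb₁, hp.1, hq.1⟩).trans (hunique b₂ ⟨hb₂, hp.2, hq.2⟩).symm) hne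

theorem le_card_sup (hTD : IsTransversalDesign ℓ h Gr B) {S : Finset (Finset P)}
    (hSB : S ⊆ B) (hS : S.Nonempty) : ℓ ≤ (S.sup id).card := by
  obtain ⟨b, hb⟩ := hS
  rw [← hTD.block_card b (hSB hb)]
  exact Finset.card_le_card (Finset.le_sup (f := id) hb)

theorem three_mul_le_card_sup_add_three (hTD : IsTransversalDesign ℓ h Gr B)
    {S : Finset (Finset P)} (hSB : S ⊆ B) (hS : 2 < S.card) :
    3 * ℓ ≤ (S.sup id).card + 3 := by
  obtain ⟨a, b, c, ha, hb, hc, hab, hac, hbc⟩ := Finset.two_lt_card_iff.mp hS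
  have hsub : a ∪ b ∪ c ⊆ S.sup id :=
    Finset.union_subset (Finset.union_subset (Finset.le_sup (f := id) ha)
      (Finset.le_sup (f := id) hb)) (Finset.le_sup (f := id) hc)
  have hcover := Finset.card_add_card_add_card_le a b c
  have := Finset.card_le_card hsub
  have := hTD.block_card a (hSB ha)
  have := hTD.block_card b (hSB hb)
  have := hTD.block_card c (hSB hc)
  have := hTD.card_inter_le_one (hSB ha) (hSB hb) hab
  have := hTD.card_inter_le_one (hSB ha) (hSB hc) hac
  have := hTD.card_inter_le_one (hSB hb) (hSB hc) hbc
  omega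

end IsTransversalDesign

theorem td3_hall_six_general {P : Type*} [Fintype P] [DecidableEq P]
    (α : ℕ) (Gr B : Finset (Finset P))
    (hTD : IsTransversalDesign 3 α Gr B) :
    ∀ S : Finset (Finset P), S ⊆ B → 1 ≤ S.card → S.card ≤ 6 →
      S.card ≤ (S.sup id).card := by
  intro S hSB h1 h6
  rcases le_or_gt S.card 3 with hS | hS
  · exact hS.trans (hTD.le_card_sup hSB (Finset.card_pos.mp h1))
  · have := hTD.three_mul_le_card_sup_add_three hSB (by omega)
    omega

/-- In a `TD(3,α)` with `α ≥ 7`, any `i` distinct blocks, `1 ≤ i ≤ 6`,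
cover at least `i` points. -/
theorem td3_hall_six {P : Type*} [Fintype P] [DecidableEq P]
    (α : ℕ) (hα : 7 ≤ α) (Gr B : Finset (Finset P))
    (hTD : IsTransversalDesign 3 α Gr B) :
    ∀ S : Finset (Finset P), S ⊆ B → 1 ≤ S.card → S.card ≤ 6 →
      S.card ≤ (S.sup id).card :=
  td3_hall_six_general α Gr B hTD
end

section
/- Let (P,G,B) be a transversal design TD(3,5). Then: (i) for every 1 ≤ i ≤ 12 and every set of i distinct blocks of B, the union of these blocks contains at least i points; and (ii) there exists a set of 13 distinct blocks of B whose union contains at most 12 points. -/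
open Finset

/-- The plain bounds `s ≤ aᵢ * aⱼ` already exclude every profile `(a₁, a₂, a₃)` except `(4, 4, 3)`
up to order, and for that one the correction term gives `s ≤ 10`. -/
theorem le_add_add_of_le_mul_sub {s a₁ a₂ a₃ : ℕ} (ha₁ : a₁ ≤ 5) (ha₂ : a₂ ≤ 5) (ha₃ : a₃ ≤ 5)
    (hs : s ≤ 12) (h₃ : s + (5 - a₃) * (a₁ + a₂ - 5) ≤ a₁ * a₂)
    (h₁ : s + (5 - a₁) * (a₂ + a₃ - 5) ≤ a₂ * a₃)
    (h₂ : s + (5 - a₂) * (a₃ + a₁ - 5) ≤ a₃ * a₁) : s ≤ a₁ + a₂ + a₃ := by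
  interval_cases a₁ <;> interval_cases a₂ <;> interval_cases a₃ <;> omega

namespace IsTransversalDesign

variable {P : Type*} [Fintype P] [DecidableEq P] {ℓ h : ℕ} {Gr B : Finset (Finset P)}
  {g g' g₁ g₂ g₃ b b' : Finset P} {p q x y z : P}

theorem inter_eq_singleton (hTD : IsTransversalDesign ℓ h Gr B) (hb : b ∈ B) (hg : g ∈ Gr)
    (hpb : p ∈ b) (hpg : p ∈ g) : b ∩ g = {p} :=
  (eq_singleton_iff_unique_mem.2 ⟨mem_inter.2 ⟨hpb, hpg⟩, fun q hq =>
    card_le_one.1 (hTD.block_meets_group b hb g hg).le q hq p (mem_inter.2 ⟨hpb, hpg⟩)⟩)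

theorem exists_mem_inter (hTD : IsTransversalDesign ℓ h Gr B) (hb : b ∈ B) (hg : g ∈ Gr) :
    ∃ p ∈ g, p ∈ b := by
  obtain ⟨p, hp⟩ := card_eq_one.1 (hTD.block_meets_group b hb g hg)
  have hp' : p ∈ b ∩ g := hp ▸ mem_singleton_self p
  exact ⟨p, (mem_inter.1 hp').2, (mem_inter.1 hp').1⟩

theorem eq_of_mem_of_mem_s9 (hTD : IsTransversalDesign ℓ h Gr B) (hb : b ∈ B) (hg : g ∈ Gr)
    (hpb : p ∈ b) (hpg : p ∈ g) (hqb : q ∈ b) (hqg : q ∈ g) : p = q := by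
  have hq : q ∈ b ∩ g := mem_inter.2 ⟨hqb, hqg⟩
  rw [hTD.inter_eq_singleton hb hg hpb hpg, mem_singleton] at hq
  exact hq.symm

theorem block_eq_of_mem_of_mem (hTD : IsTransversalDesign ℓ h Gr B) (hg : g ∈ Gr)
    (hg' : g' ∈ Gr) (hne : g ≠ g') (hp : p ∈ g) (hq : q ∈ g') (hb : b ∈ B) (hb' : b' ∈ B)
    (hpb : p ∈ b) (hqb : q ∈ b) (hpb' : p ∈ b') (hqb' : q ∈ b') : b = b' :=
  (hTD.pairs_covered p q g hg g' hg' hne hp hq).unique ⟨hb, hpb, hqb⟩ ⟨hb', hpb', hqb'⟩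

theorem ne_of_mem_of_mem (hTD : IsTransversalDesign ℓ h Gr B) (hg : g ∈ Gr) (hg' : g' ∈ Gr)
    (hne : g ≠ g') (hp : p ∈ g) (hq : q ∈ g') : p ≠ q := by
  rintro rfl
  exact disjoint_left.1 (hTD.groups_disjoint g hg g' hg' hne) hp hq

theorem card_inter_le (hTD : IsTransversalDesign ℓ h Gr B) (hg : g ∈ Gr) (X : Finset P) :
    #(g ∩ X) ≤ h :=
  (card_le_card inter_subset_left).trans_eq (hTD.group_card g hg)

theorem card_eq_sum_card_inter (hTD : IsTransversalDesign ℓ h Gr B) (X : Finset P) :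
    #X = ∑ g ∈ Gr, #(g ∩ X) := by
  have hX : X = Gr.biUnion (· ∩ X) := by
    ext p
    obtain ⟨g, hg, hpg⟩ := hTD.groups_cover p
    simp only [mem_biUnion, mem_inter]
    exact ⟨fun hp => ⟨g, hg, hpg, hp⟩, fun ⟨_, _, _, hp⟩ => hp⟩
  rw [← card_biUnion, ← hX]
  exact fun g hg g' hg' hne =>
    (hTD.groups_disjoint g hg g' hg' hne).mono inter_subset_left inter_subset_left

/-- Since a block `b` meets `g'` in a single point, `b ∩ g' ⊆ X` says that this point lies
in `X`. -/
theorem card_filter_mem_and_inter_subset (hTD : IsTransversalDesign ℓ h Gr B) (hg : g ∈ Gr)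
    (hg' : g' ∈ Gr) (hne : g ≠ g') (hz : z ∈ g) (X : Finset P) :
    #{b ∈ B | z ∈ b ∧ b ∩ g' ⊆ X} = #(g' ∩ X) := by
  apply le_antisymm
  · refine card_le_card_of_forall_subsingleton (fun b p => p ∈ b) ?_ ?_
    · intro b hb
      obtain ⟨hbB, -, hbX⟩ := mem_filter.1 hb
      obtain ⟨p, hpg, hpb⟩ := hTD.exists_mem_inter hbB hg'
      exact ⟨p, mem_inter.2 ⟨hpg, hbX (mem_inter.2 ⟨hpb, hpg⟩)⟩, hpb⟩
    · intro p hp b₁ hb₁ b₂ hb₂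
      obtain ⟨⟨hb₁B, hzb₁, -⟩, hpb₁⟩ := And.imp_left mem_filter.1 hb₁
      obtain ⟨⟨hb₂B, hzb₂, -⟩, hpb₂⟩ := And.imp_left mem_filter.1 hb₂
      exact hTD.block_eq_of_mem_of_mem hg hg' hne hz (mem_inter.1 hp).1 hb₁B hb₂B hzb₁ hpb₁
        hzb₂ hpb₂
  · refine card_le_card_of_forall_subsingleton' (fun b p => p ∈ b) ?_ ?_
    · intro p hp
      obtain ⟨hpg, hpX⟩ := mem_inter.1 hp
      obtain ⟨b, ⟨hbB, hzb, hpb⟩, -⟩ := hTD.pairs_covered z p g hg g' hg' hne hz hpg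
      refine ⟨b, mem_filter.2 ⟨hbB, hzb, ?_⟩, hpb⟩
      rwa [hTD.inter_eq_singleton hbB hg' hpb hpg, singleton_subset_iff]
    · intro b hb p₁ hp₁ p₂ hp₂
      exact hTD.eq_of_mem_of_mem_s9 (mem_filter.1 hb).1 hg' hp₁.2 (mem_inter.1 hp₁.1).1 hp₂.2
        (mem_inter.1 hp₂.1).1

theorem card_filter_mem (hTD : IsTransversalDesign ℓ h Gr B) (hg : g ∈ Gr) (hg' : g' ∈ Gr)
    (hne : g ≠ g') (hz : z ∈ g) : #{b ∈ B | z ∈ b} = h := by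
  simpa [inter_subset_right, hTD.group_card g' hg'] using
    hTD.card_filter_mem_and_inter_subset hg hg' hne hz g'

theorem card_filter_mem_and_mem (hTD : IsTransversalDesign ℓ h Gr B) (hg : g ∈ Gr)
    (hg' : g' ∈ Gr) (hne : g ≠ g') (hx : x ∈ g) (hy : y ∈ g') :
    #{b ∈ B | x ∈ b ∧ y ∈ b} = 1 := by
  obtain ⟨b, hb, hunique⟩ := hTD.pairs_covered x y g hg g' hg' hne hx hy
  exact card_eq_one.2 ⟨b, by ext b'; simpa using ⟨hunique b', fun h => h ▸ hb⟩⟩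

theorem card_blocks (hTD : IsTransversalDesign ℓ h Gr B) (hg : g ∈ Gr) (hg' : g' ∈ Gr)
    (hne : g ≠ g') : #B = h * h := by
  have := card_mul_eq_card_mul (s := B) (t := g) (m := 1) (n := h) (fun b p => p ∈ b)
    (fun b hb => by
      simpa [bipartiteAbove, filter_mem_eq_inter, inter_comm] using
        hTD.block_meets_group b hb g hg)
    (fun p hp => hTD.card_filter_mem hg hg' hne hp)
  rwa [mul_one, hTD.group_card g hg] at this

theorem card_filter_inter_subset_le_mul (hTD : IsTransversalDesign ℓ h Gr B) (hg₁ : g₁ ∈ Gr)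
    (hg₂ : g₂ ∈ Gr) (h12 : g₁ ≠ g₂) (X Y : Finset P) :
    #{b ∈ B | b ∩ g₁ ⊆ X ∧ b ∩ g₂ ⊆ Y} ≤ #(g₁ ∩ X) * #(g₂ ∩ Y) := by
  rw [← card_product]
  refine card_le_card_of_forall_subsingleton (fun b pq => pq.1 ∈ b ∧ pq.2 ∈ b) ?_ ?_
  · intro b hb
    obtain ⟨hbB, hbX, hbY⟩ := mem_filter.1 hb
    obtain ⟨p, hpg, hpb⟩ := hTD.exists_mem_inter hbB hg₁
    obtain ⟨q, hqg, hqb⟩ := hTD.exists_mem_inter hbB hg₂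
    exact ⟨(p, q), mem_product.2 ⟨mem_inter.2 ⟨hpg, hbX (mem_inter.2 ⟨hpb, hpg⟩)⟩,
      mem_inter.2 ⟨hqg, hbY (mem_inter.2 ⟨hqb, hqg⟩)⟩⟩, hpb, hqb⟩
  · rintro ⟨p, q⟩ hpq b hb b' hb'
    obtain ⟨hp, hq⟩ := mem_product.1 hpq
    exact hTD.block_eq_of_mem_of_mem hg₁ hg₂ h12 (mem_inter.1 hp).1 (mem_inter.1 hq).1
      (mem_filter.1 hb.1).1 (mem_filter.1 hb'.1).1 hb.2.1 hb.2.2 hb'.2.1 hb'.2.2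

/-- Of the `#(g₁ ∩ X)` blocks through `z` whose `g₁`-point lies in `X`, at most `h - #(g₂ ∩ Y)`
have their `g₂`-point outside `Y`. -/
theorem card_inter_add_card_inter_sub_le (hTD : IsTransversalDesign ℓ h Gr B) (hg₁ : g₁ ∈ Gr)
    (hg₂ : g₂ ∈ Gr) (hg₃ : g₃ ∈ Gr) (h13 : g₁ ≠ g₃) (h23 : g₂ ≠ g₃) (hz : z ∈ g₃)
    (X Y : Finset P) :
    #(g₁ ∩ X) + #(g₂ ∩ Y) - h ≤ #{b ∈ B | z ∈ b ∧ b ∩ g₁ ⊆ X ∧ b ∩ g₂ ⊆ Y} := by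
  have hX := hTD.card_filter_mem_and_inter_subset hg₃ hg₁ h13.symm hz X
  have hY := hTD.card_filter_mem_and_inter_subset hg₃ hg₂ h23.symm hz (g₂ \ Y)
  have hcover : {b ∈ B | z ∈ b ∧ b ∩ g₁ ⊆ X} ⊆
      {b ∈ B | z ∈ b ∧ b ∩ g₁ ⊆ X ∧ b ∩ g₂ ⊆ Y} ∪ {b ∈ B | z ∈ b ∧ b ∩ g₂ ⊆ g₂ \ Y} := by
    intro b hb
    obtain ⟨hbB, hzb, hbX⟩ := mem_filter.1 hb
    obtain ⟨q, hqg, hqb⟩ := hTD.exists_mem_inter hbB hg₂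
    simp only [mem_union, mem_filter, hTD.inter_eq_singleton hbB hg₂ hqb hqg,
      singleton_subset_iff, mem_sdiff]
    tauto
  have hsplit : #(g₂ ∩ (g₂ \ Y)) + #(g₂ ∩ Y) = h := by
    rw [inter_eq_right.2 sdiff_subset, card_sdiff_add_card_inter, hTD.group_card g₂ hg₂]
  have := (card_le_card hcover).trans (card_union_le _ _)
  omega

theorem card_filter_subset_add_le (hTD : IsTransversalDesign ℓ h Gr B) (hg₁ : g₁ ∈ Gr)
    (hg₂ : g₂ ∈ Gr) (hg₃ : g₃ ∈ Gr) (h12 : g₁ ≠ g₂) (h13 : g₁ ≠ g₃) (h23 : g₂ ≠ g₃)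
    (U : Finset P) :
    #{b ∈ B | b ⊆ U} + (h - #(g₃ ∩ U)) * (#(g₁ ∩ U) + #(g₂ ∩ U) - h) ≤
      #(g₁ ∩ U) * #(g₂ ∩ U) := by
  set W : P → Finset (Finset P) := fun z => {b ∈ B | z ∈ b ∧ b ∩ g₁ ⊆ U ∧ b ∩ g₂ ⊆ U}
  have hmissing : #(g₃ \ U) = h - #(g₃ ∩ U) := by
    rw [← hTD.group_card g₃ hg₃, ← card_sdiff_add_card_inter g₃ U, Nat.add_sub_cancel]
  have hdisj : ((g₃ \ U : Finset P) : Set P).PairwiseDisjoint W := by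
    intro z hz z' hz' hne
    refine disjoint_left.2 fun b hb hb' => hne ?_
    exact hTD.eq_of_mem_of_mem_s9 (mem_filter.1 hb).1 hg₃ (mem_filter.1 hb).2.1
      (mem_sdiff.1 hz).1 (mem_filter.1 hb').2.1 (mem_sdiff.1 hz').1
  have hsep : Disjoint {b ∈ B | b ⊆ U} ((g₃ \ U).biUnion W) := by
    refine disjoint_left.2 fun b hb hb' => ?_
    obtain ⟨z, hz, hbz⟩ := mem_biUnion.1 hb'
    exact (mem_sdiff.1 hz).2 ((mem_filter.1 hb).2 (mem_filter.1 hbz).2.1)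
  have hsub :
      {b ∈ B | b ⊆ U} ∪ (g₃ \ U).biUnion W ⊆ {b ∈ B | b ∩ g₁ ⊆ U ∧ b ∩ g₂ ⊆ U} := by
    refine union_subset (fun b hb => ?_) (biUnion_subset.2 fun z _ b hb => ?_)
    · obtain ⟨hbB, hbU⟩ := mem_filter.1 hb
      exact mem_filter.2 ⟨hbB, inter_subset_left.trans hbU, inter_subset_left.trans hbU⟩
    · obtain ⟨hbB, -, hbU⟩ := mem_filter.1 hb
      exact mem_filter.2 ⟨hbB, hbU⟩
  calc #{b ∈ B | b ⊆ U} + (h - #(g₃ ∩ U)) * (#(g₁ ∩ U) + #(g₂ ∩ U) - h)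
      = #{b ∈ B | b ⊆ U} + ∑ _z ∈ g₃ \ U, (#(g₁ ∩ U) + #(g₂ ∩ U) - h) := by
        rw [sum_const, smul_eq_mul, hmissing]
    _ ≤ #{b ∈ B | b ⊆ U} + ∑ z ∈ g₃ \ U, #(W z) := by
        gcongr with z hz
        exact hTD.card_inter_add_card_inter_sub_le hg₁ hg₂ hg₃ h13 h23 (mem_sdiff.1 hz).1 U U
    _ = #({b ∈ B | b ⊆ U} ∪ (g₃ \ U).biUnion W) := by
        rw [card_union_of_disjoint hsep, card_biUnion hdisj]
    _ ≤ #(g₁ ∩ U) * #(g₂ ∩ U) :=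
        (card_le_card hsub).trans (hTD.card_filter_inter_subset_le_mul hg₁ hg₂ h12 U U)

theorem exists_noncollinear_triple (hTD : IsTransversalDesign ℓ h Gr B) (hg₁ : g₁ ∈ Gr)
    (hg₂ : g₂ ∈ Gr) (hg₃ : g₃ ∈ Gr) (h12 : g₁ ≠ g₂) (hh : 2 ≤ h) :
    ∃ x ∈ g₁, ∃ y ∈ g₂, ∃ z ∈ g₃, ∀ b ∈ B, x ∈ b → y ∈ b → z ∉ b := by
  have hcard : ∀ g ∈ Gr, 1 < #g := fun g hg => (hTD.group_card g hg).symm ▸ hh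
  obtain ⟨x, hx⟩ := card_pos.1 ((hcard g₁ hg₁).trans' zero_lt_one)
  obtain ⟨y, hy⟩ := card_pos.1 ((hcard g₂ hg₂).trans' zero_lt_one)
  obtain ⟨b₀, ⟨hb₀, hxb₀, hyb₀⟩, hunique⟩ := hTD.pairs_covered x y g₁ hg₁ g₂ hg₂ h12 hx hy
  obtain ⟨w, hwg, hwb₀⟩ := hTD.exists_mem_inter hb₀ hg₃
  obtain ⟨z, hz, hzw⟩ := exists_mem_ne (hcard g₃ hg₃) w
  refine ⟨x, hx, y, hy, z, hz, fun b hb hxb hyb hzb => hzw ?_⟩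
  rw [hunique b ⟨hb, hxb, hyb⟩] at hzb
  exact hTD.eq_of_mem_of_mem_s9 hb₀ hg₃ hzb hz hwb₀ hwg

theorem card_filter_notMem_add_three_mul (hTD : IsTransversalDesign ℓ h Gr B) (hg₁ : g₁ ∈ Gr)
    (hg₂ : g₂ ∈ Gr) (hg₃ : g₃ ∈ Gr) (h12 : g₁ ≠ g₂) (h13 : g₁ ≠ g₃) (h23 : g₂ ≠ g₃)
    (hx : x ∈ g₁) (hy : y ∈ g₂) (hz : z ∈ g₃) (hxyz : ∀ b ∈ B, x ∈ b → y ∈ b → z ∉ b) :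
    #{b ∈ B | x ∉ b ∧ y ∉ b ∧ z ∉ b} + 3 * h = h * h + 3 := by
  have hX := hTD.card_filter_mem hg₁ hg₂ h12 hx
  have hY := hTD.card_filter_mem hg₂ hg₁ h12.symm hy
  have hZ := hTD.card_filter_mem hg₃ hg₁ h13.symm hz
  have hXY := hTD.card_filter_mem_and_mem hg₁ hg₂ h12 hx hy
  have hXZ := hTD.card_filter_mem_and_mem hg₁ hg₃ h13 hx hz
  have hYZ := hTD.card_filter_mem_and_mem hg₂ hg₃ h23 hy hz
  have hXYZ : {b ∈ B | (x ∈ b ∧ z ∈ b) ∧ y ∈ b ∧ z ∈ b} = ∅ :=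
    filter_eq_empty_iff.2 fun b hb hxyzb => hxyz b hb hxyzb.1.1 hxyzb.2.1 hxyzb.1.2
  have h1 := card_union_add_card_inter {b ∈ B | x ∈ b} {b ∈ B | y ∈ b}
  have h2 := card_union_add_card_inter ({b ∈ B | x ∈ b} ∪ {b ∈ B | y ∈ b}) {b ∈ B | z ∈ b}
  have h3 := card_union_add_card_inter {b ∈ B | x ∈ b ∧ z ∈ b} {b ∈ B | y ∈ b ∧ z ∈ b}
  have h4 := card_filter_add_card_filter_not (s := B) (fun b => (x ∈ b ∨ y ∈ b) ∨ z ∈ b)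
  rw [union_inter_distrib_right] at h2
  simp only [← filter_and, ← filter_or] at h1 h2 h3 h4
  simp only [not_or, and_assoc, hTD.card_blocks hg₁ hg₂ h12] at h4
  rw [hXYZ, card_empty] at h3
  omega

theorem card_le_card_sup (hTD : IsTransversalDesign ℓ 5 {g₁, g₂, g₃} B) (h12 : g₁ ≠ g₂)
    (h13 : g₁ ≠ g₃) (h23 : g₂ ≠ g₃) {S : Finset (Finset P)} (hS : S ⊆ B) (hS12 : #S ≤ 12) :
    #S ≤ #(S.sup id) := by
  have hg₁ : g₁ ∈ ({g₁, g₂, g₃} : Finset (Finset P)) := by simp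
  have hg₂ : g₂ ∈ ({g₁, g₂, g₃} : Finset (Finset P)) := by simp
  have hg₃ : g₃ ∈ ({g₁, g₂, g₃} : Finset (Finset P)) := by simp
  set U := S.sup id
  have hSU : #S ≤ #{b ∈ B | b ⊆ U} :=
    card_le_card fun b hb => mem_filter.2 ⟨hS hb, le_sup (f := id) hb⟩
  have hU : #U = #(g₁ ∩ U) + #(g₂ ∩ U) + #(g₃ ∩ U) := by
    rw [hTD.card_eq_sum_card_inter, sum_insert (by simp [h12, h13]),
      sum_insert (by simpa using h23), sum_singleton, add_assoc]
  rw [hU]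
  refine le_add_add_of_le_mul_sub (hTD.card_inter_le hg₁ U) (hTD.card_inter_le hg₂ U)
    (hTD.card_inter_le hg₃ U) hS12 ?_ ?_ ?_
  · exact (Nat.add_le_add_right hSU _).trans
      (hTD.card_filter_subset_add_le hg₁ hg₂ hg₃ h12 h13 h23 U)
  · exact (Nat.add_le_add_right hSU _).trans
      (hTD.card_filter_subset_add_le hg₂ hg₃ hg₁ h23 h12.symm h13.symm U)
  · exact (Nat.add_le_add_right hSU _).trans
      (hTD.card_filter_subset_add_le hg₃ hg₁ hg₂ h13.symm h23.symm h12 U)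

theorem exists_subset_card_add_eq_and_card_sup_add_le (hTD : IsTransversalDesign ℓ h Gr B)
    (hg₁ : g₁ ∈ Gr) (hg₂ : g₂ ∈ Gr) (hg₃ : g₃ ∈ Gr) (h12 : g₁ ≠ g₂) (h13 : g₁ ≠ g₃)
    (h23 : g₂ ≠ g₃) (hh : 2 ≤ h) :
    ∃ S ⊆ B, #S + 3 * h = h * h + 3 ∧ #(S.sup id) + 3 ≤ Fintype.card P := by
  obtain ⟨x, hx, y, hy, z, hz, hxyz⟩ := hTD.exists_noncollinear_triple hg₁ hg₂ hg₃ h12 hh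
  have hT : #({x, y, z} : Finset P) = 3 := card_eq_three.2 ⟨x, y, z,
    hTD.ne_of_mem_of_mem hg₁ hg₂ h12 hx hy, hTD.ne_of_mem_of_mem hg₁ hg₃ h13 hx hz,
    hTD.ne_of_mem_of_mem hg₂ hg₃ h23 hy hz, rfl⟩
  have hsup : ({b ∈ B | x ∉ b ∧ y ∉ b ∧ z ∉ b}.sup id) ⊆ {x, y, z}ᶜ :=
    Finset.sup_le fun b hb => by
      rw [id, subset_compl_comm, subset_iff]
      simpa using (mem_filter.1 hb).2
  refine ⟨{b ∈ B | x ∉ b ∧ y ∉ b ∧ z ∉ b}, filter_subset _ B,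
    hTD.card_filter_notMem_add_three_mul hg₁ hg₂ hg₃ h12 h13 h23 hx hy hz hxyz, ?_⟩
  have := card_le_card hsup
  rw [card_compl, hT] at this
  have := card_le_univ ({x, y, z} : Finset P)
  omega

end IsTransversalDesign

/-- In a `TD(3,5)`: (i) any `i` distinct blocks, `1 ≤ i ≤ 12`, cover at least
`i` points, and (ii) there exist `13` distinct blocks covering at most `12`
points. -/
theorem td3_5_batch_parameter {P : Type*} [Fintype P] [DecidableEq P]
    (Gr B : Finset (Finset P)) (hTD : IsTransversalDesign 3 5 Gr B) :
    (∀ S : Finset (Finset P), S ⊆ B → 1 ≤ S.card → S.card ≤ 12 →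
      S.card ≤ (S.sup id).card) ∧
    (∃ S : Finset (Finset P), S ⊆ B ∧ S.card = 13 ∧ (S.sup id).card ≤ 12) := by
  obtain ⟨g₁, g₂, g₃, h12, h13, h23, rfl⟩ := card_eq_three.1 hTD.card_groups
  refine ⟨fun S hS _ hS12 => hTD.card_le_card_sup h12 h13 h23 hS hS12, ?_⟩
  obtain ⟨S, hSB, hS, hSU⟩ := hTD.exists_subset_card_add_eq_and_card_sup_add_le (by simp)
    (by simp) (by simp) h12 h13 h23 (by norm_num)
  rw [hTD.card_points] at hSU
  exact ⟨S, hSB, by omega, by omega⟩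
end

section
/- Let (X,B) be an affine plane of order q. Then for every 1 ≤ i ≤ q² and every set of i distinct blocks of B, the union of these blocks contains at least i points. -/
/-!
Let `U` be the union of `i` blocks of an affine plane of order `q ≥ 2` and suppose `|U| < i`.
A point outside `U` lies on `q + 1` blocks, none of them chosen, so `i ≤ q² - 1`; hence a second
point lies outside `U`, the two points together meet `2q + 1` blocks, and `|U| < i ≤ q² - q - 1`.
But distinct blocks share no pair of points, so counting ordered pairs inside `U` gives
`i q (q - 1) ≤ |U| (|U| - 1) ≤ |U| q (q - 1)`, i.e. `i ≤ |U|`.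
-/

/-- An affine plane of order `s`: `X` is a set of `s²` points and `B` is a
collection of `s(s+1)` blocks, each of size `s`, such that any two distinct
points lie together in exactly one block. -/
structure IsAffinePlane {X : Type*} [Fintype X] [DecidableEq X]
    (s : ℕ) (B : Finset (Finset X)) : Prop where
  card_points : Fintype.card X = s ^ 2
  card_blocks : B.card = s * (s + 1)
  block_card : ∀ b ∈ B, b.card = s
  pairs_covered : ∀ p q : X, p ≠ q → ∃! b, b ∈ B ∧ p ∈ b ∧ q ∈ b

open Finset

def IsLinearSpace {X : Type*} (B : Finset (Finset X)) : Prop :=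
  ∀ p q : X, p ≠ q → ∃! b, b ∈ B ∧ p ∈ b ∧ q ∈ b

theorem Finset.card_add_card_filter_le_of_subset {α : Type*} {S B : Finset α} (P : α → Prop)
    [DecidablePred P] (hSB : S ⊆ B) (hS : ∀ b ∈ S, ¬P b) : #S + #{b ∈ B | P b} ≤ #B := by
  rw [← card_filter_add_card_filter_not (s := B) P, add_comm]
  exact Nat.add_le_add_left (card_le_card fun b hb => mem_filter.mpr ⟨hSB hb, hS b hb⟩) _

namespace IsLinearSpace

variable {X : Type*} {B : Finset (Finset X)}

theorem pairwiseDisjoint_offDiag (hB : IsLinearSpace B) :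
    (B : Set (Finset X)).PairwiseDisjoint offDiag := by
  intro b₁ hb₁ b₂ hb₂ hne
  refine disjoint_left.mpr fun ⟨x, y⟩ h₁ h₂ => hne ?_
  rw [mem_offDiag] at h₁ h₂
  obtain ⟨b, -, hunique⟩ := hB x y h₁.2.2
  exact (hunique b₁ ⟨hb₁, h₁.1, h₁.2.1⟩).trans (hunique b₂ ⟨hb₂, h₂.1, h₂.2.1⟩).symm

variable [DecidableEq X]

theorem card_filter_mem_and_mem (hB : IsLinearSpace B) {p p' : X} (hpp' : p ≠ p') :
    #{b ∈ B | p ∈ b ∧ p' ∈ b} = 1 := by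
  obtain ⟨b, hb, hunique⟩ := hB p p' hpp'
  refine card_eq_one.mpr ⟨b, ext fun c => ?_⟩
  simp only [mem_filter, mem_singleton]
  exact ⟨hunique c, fun hc => hc ▸ hb⟩

theorem sum_card_offDiag_le (hB : IsLinearSpace B) {S : Finset (Finset X)} (hSB : S ⊆ B) :
    ∑ b ∈ S, #b.offDiag ≤ #(S.sup id).offDiag := by
  rw [← card_biUnion ((pairwiseDisjoint_offDiag hB).subset (by exact_mod_cast hSB))]
  refine card_le_card (biUnion_subset.mpr fun b hb => ?_)
  exact offDiag_mono (le_sup (f := id) hb)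

/-- The blocks through `p`, with `p` removed, partition the remaining points. -/
theorem card_filter_mem_mul [Fintype X] (hB : IsLinearSpace B) {s : ℕ}
    (hs : ∀ b ∈ B, #b = s) (p : X) :
    #{b ∈ B | p ∈ b} * (s - 1) = Fintype.card X - 1 := by
  have hdisj : (({b ∈ B | p ∈ b} : Finset _) : Set (Finset X)).PairwiseDisjoint (·.erase p) := by
    intro b₁ hb₁ b₂ hb₂ hne
    rw [mem_coe, mem_filter] at hb₁ hb₂
    refine disjoint_left.mpr fun x hx₁ hx₂ => hne ?_
    rw [mem_erase] at hx₁ hx₂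
    obtain ⟨b, -, hunique⟩ := hB p x hx₁.1.symm
    exact (hunique b₁ ⟨hb₁.1, hb₁.2, hx₁.2⟩).trans (hunique b₂ ⟨hb₂.1, hb₂.2, hx₂.2⟩).symm
  have hcover : {b ∈ B | p ∈ b}.biUnion (·.erase p) = univ.erase p := by
    ext x
    simp only [mem_biUnion, mem_filter, mem_erase, mem_univ, and_true]
    refine ⟨fun ⟨b, _, hx, _⟩ => hx, fun hx => ?_⟩
    obtain ⟨b, ⟨hb, hpb, hxb⟩, -⟩ := hB p x hx.symm
    exact ⟨b, ⟨hb, hpb⟩, hx, hxb⟩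
  have hblock : ∀ b ∈ {b ∈ B | p ∈ b}, #(b.erase p) = s - 1 := fun b hb => by
    rw [mem_filter] at hb
    rw [card_erase_of_mem hb.2, hs b hb.1]
  rw [← card_univ, ← card_erase_of_mem (mem_univ p), ← hcover, card_biUnion hdisj,
    sum_congr rfl hblock, sum_const, smul_eq_mul]

end IsLinearSpace

namespace IsAffinePlane

variable {X : Type*} [Fintype X] [DecidableEq X] {q : ℕ} {B : Finset (Finset X)}

theorem isLinearSpace (hAP : IsAffinePlane q B) : IsLinearSpace B :=
  hAP.pairs_covered

theorem card_filter_mem (hAP : IsAffinePlane q B) (hq : 2 ≤ q) (p : X) :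
    #{b ∈ B | p ∈ b} = q + 1 := by
  have h := hAP.isLinearSpace.card_filter_mem_mul hAP.block_card p
  rw [hAP.card_points, ← one_pow 2, Nat.sq_sub_sq] at h
  exact Nat.eq_of_mul_eq_mul_right (by omega) h

theorem card_filter_mem_or_mem (hAP : IsAffinePlane q B) (hq : 2 ≤ q) {p p' : X}
    (hpp' : p ≠ p') : #{b ∈ B | p ∈ b ∨ p' ∈ b} = 2 * q + 1 := by
  have h := card_union_add_card_inter {b ∈ B | p ∈ b} {b ∈ B | p' ∈ b}
  rw [← filter_or, ← filter_and, hAP.card_filter_mem hq, hAP.card_filter_mem hq,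
    hAP.isLinearSpace.card_filter_mem_and_mem hpp'] at h
  omega

theorem card_le_card_sup_of_card_sup_le (hAP : IsAffinePlane q B) (hq : 2 ≤ q)
    {S : Finset (Finset X)} (hSB : S ⊆ B) (hU : #(S.sup id) ≤ q * (q - 1) + 1) :
    #S ≤ #(S.sup id) := by
  have hcount := hAP.isLinearSpace.sum_card_offDiag_le hSB
  rw [sum_congr rfl fun b hb => by rw [offDiag_card, hAP.block_card b (hSB hb)], sum_const,
    smul_eq_mul, offDiag_card, ← Nat.mul_sub_one, ← Nat.mul_sub_one] at hcount
  have hpos : 0 < q * (q - 1) := Nat.mul_pos (by omega) (by omega)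
  exact Nat.le_of_mul_le_mul_right (hcount.trans (Nat.mul_le_mul_left _ (by omega))) hpos

end IsAffinePlane

/-- In an affine plane of order `q`, any `i` distinct blocks, `1 ≤ i ≤ q²`,
cover at least `i` points. -/
theorem affine_plane_hall {X : Type*} [Fintype X] [DecidableEq X]
    (q : ℕ) (B : Finset (Finset X)) (hAP : IsAffinePlane q B) :
    ∀ S : Finset (Finset X), S ⊆ B → 1 ≤ S.card → S.card ≤ q ^ 2 →
      S.card ≤ (S.sup id).card := by
  intro S hSB hS hSq
  obtain ⟨b, hb⟩ := card_pos.mp hS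
  have hqU : q ≤ #(S.sup id) :=
    hAP.block_card b (hSB hb) ▸ card_le_card (le_sup (f := id) hb)
  rcases lt_or_ge q 2 with hq | hq
  · have : q ^ 2 ≤ q := by interval_cases q <;> simp
    omega
  by_contra! hUS
  have hS_avoid (x : X) (hx : x ∉ S.sup id) : ∀ b ∈ S, x ∉ b :=
    fun b hb hxb => hx (le_sup (f := id) hb hxb)
  have hsq : q * (q + 1) = q ^ 2 + q := by ring
  have hq1 : q * (q + 1) = q * (q - 1) + 2 * q := by cases q <;> simp; ring
  obtain ⟨p, -, hp⟩ := exists_mem_notMem_of_card_lt_card (s := S.sup id) (t := univ)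
    (by rw [card_univ, hAP.card_points]; omega)
  have h₁ := card_add_card_filter_le_of_subset _ hSB (hS_avoid p hp)
  rw [hAP.card_filter_mem hq, hAP.card_blocks] at h₁
  obtain ⟨p', -, hp'⟩ := exists_mem_notMem_of_card_lt_card (s := insert p (S.sup id)) (t := univ)
    (by have := card_insert_le p (S.sup id); rw [card_univ, hAP.card_points]; omega)
  rw [mem_insert, not_or] at hp'
  have h₂ := card_add_card_filter_le_of_subset (fun b => p ∈ b ∨ p' ∈ b) hSB
    fun b hb h => h.elim (hS_avoid p hp b hb) (hS_avoid p' hp'.2 b hb)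
  rw [hAP.card_filter_mem_or_mem hq (Ne.symm hp'.1), hAP.card_blocks] at h₂
  have := hAP.card_le_card_sup_of_card_sup_le hq hSB (by omega)
  omega
end

section
/- Let (X,B) be an affine plane of order q with q ≥ 2. Then for every 1 ≤ i ≤ (q² − q + 2)/2 and every set of i distinct blocks of B, the union of these blocks contains at least i + (q − 1) points. -/
/-!
Two distinct blocks of an affine plane share at most one point, so no 2-subset of points lies in
two distinct blocks. Hence `i` blocks of size `q` contain `i * C(q, 2)` different pairs of points
of their union `U`, and `i * C(q, 2) ≤ C(|U|, 2)`. If `|U| ≤ i + q - 2` this contradicts the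
elementary inequality `C(i + q - 2, 2) < i * C(q, 2)`, valid for `q ≥ 2` and
`1 ≤ i ≤ (q² - q + 2) / 2`.
-/

namespace Finset

theorem sum_choose_two_card_le_choose_two_card_sup {α : Type*} [DecidableEq α]
    {S : Finset (Finset α)}
    (hS : (S : Set (Finset α)).Pairwise fun b b' => (b ∩ b').card ≤ 1) :
    ∑ b ∈ S, b.card.choose 2 ≤ (S.sup id).card.choose 2 := by
  have hdisj : (S : Set (Finset α)).PairwiseDisjoint fun b => b.powersetCard 2 := by
    intro b hb b' hb' hne
    refine disjoint_left.mpr fun t ht ht' => ?_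
    rw [mem_powersetCard] at ht ht'
    have : t.card ≤ (b ∩ b').card := card_le_card (subset_inter ht.1 ht'.1)
    have := hS hb hb' hne
    omega
  calc ∑ b ∈ S, b.card.choose 2 = ∑ b ∈ S, (b.powersetCard 2).card := by
        simp only [card_powersetCard]
    _ = (S.biUnion fun b => b.powersetCard 2).card := (card_biUnion hdisj).symm
    _ ≤ ((S.sup id).powersetCard 2).card := by
        refine card_le_card (biUnion_subset.mpr fun b hb => ?_)
        exact powersetCard_mono (le_sup (f := id) hb)
    _ = (S.sup id).card.choose 2 := card_powersetCard 2 _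

end Finset

theorem IsAffinePlane.pairwise_card_inter_le_one {X : Type*} [Fintype X] [DecidableEq X]
    {s : ℕ} {B : Finset (Finset X)} (hAP : IsAffinePlane s B) :
    (B : Set (Finset X)).Pairwise fun b b' => (b ∩ b').card ≤ 1 := by
  intro b hb b' hb' hne
  by_contra! h
  obtain ⟨p, hp, r, hr, hpr⟩ := Finset.one_lt_card.mp h
  rw [Finset.mem_inter] at hp hr
  obtain ⟨c, -, hc⟩ := hAP.pairs_covered p r hpr
  exact hne ((hc b ⟨hb, hp.1, hr.1⟩).trans (hc b' ⟨hb', hp.2, hr.2⟩).symm)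

theorem Nat.choose_two_lt_mul_choose_two {i q : ℕ} (hi : 1 ≤ i) (hq : 2 ≤ q)
    (hiq : i ≤ (q ^ 2 - q + 2) / 2) : (i + q - 2).choose 2 < i * q.choose 2 := by
  obtain ⟨a, rfl⟩ := Nat.exists_eq_add_of_le' hi
  obtain ⟨b, rfl⟩ := Nat.exists_eq_add_of_le' hq
  have ha : 2 * a ≤ b * b + 3 * b + 2 := by
    have : (b + 2) ^ 2 - (b + 2) = b * b + 3 * b + 2 := by
      rw [Nat.sub_eq_iff_eq_add (by nlinarith)]; ring
    omega
  rw [show a + 1 + (b + 2) - 2 = a + b + 1 by omega, ← Nat.cast_lt (α := ℚ)]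
  push_cast [Nat.cast_choose_two]
  have ha' : (2 * a : ℚ) ≤ b * b + 3 * b + 2 := by exact_mod_cast ha
  nlinarith [mul_le_mul_of_nonneg_left ha' (by positivity : (0 : ℚ) ≤ a), sq_nonneg (b : ℚ),
    (by positivity : (0 : ℚ) ≤ a * b)]

/-- In an affine plane of order `q ≥ 2`, any `i` distinct blocks,
`1 ≤ i ≤ (q² - q + 2)/2`, cover at least `i + (q - 1)` points. -/
theorem affine_plane_deficiency_hall {X : Type*} [Fintype X] [DecidableEq X]
    (q : ℕ) (hq : 2 ≤ q) (B : Finset (Finset X)) (hAP : IsAffinePlane q B) :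
    ∀ S : Finset (Finset X), S ⊆ B → 1 ≤ S.card →
      S.card ≤ (q ^ 2 - q + 2) / 2 →
      S.card + (q - 1) ≤ (S.sup id).card := by
  intro S hSB hS_pos hS_le
  by_contra! hU
  have hpairs : S.card * q.choose 2 ≤ (S.sup id).card.choose 2 := calc
    S.card * q.choose 2 = ∑ b ∈ S, b.card.choose 2 :=
      (Finset.sum_const_nat fun b hb => by rw [hAP.block_card b (hSB hb)]).symm
    _ ≤ (S.sup id).card.choose 2 :=
      Finset.sum_choose_two_card_le_choose_two_card_sup
        (hAP.pairwise_card_inter_le_one.mono (by exact_mod_cast hSB))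
  have hU_le : (S.sup id).card.choose 2 ≤ (S.card + q - 2).choose 2 :=
    Nat.choose_le_choose 2 (by omega)
  exact (hpairs.trans hU_le).not_gt (Nat.choose_two_lt_mul_choose_two hS_pos hq hS_le)
end

section
/- Let (X,B) be a resolvable affine plane of order q for a prime power q. Then there exists a set of q² − q + 1 distinct blocks of B whose union contains at most q² − 1 points. -/
/-- An affine plane of order `s` is resolvable if its block set can be
partitioned into `s + 1` parallel classes of `s` blocks each, so that every
point lies in exactly one block of each class. -/
def IsResolvableAffinePlane {X : Type*} [Fintype X] [DecidableEq X]
    (s : ℕ) (B : Finset (Finset X)) : Prop :=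
  IsAffinePlane s B ∧
  ∃ C : Finset (Finset (Finset X)), C.card = s + 1 ∧
    (∀ c ∈ C, c.card = s ∧ c ⊆ B) ∧
    (∀ c₁ ∈ C, ∀ c₂ ∈ C, c₁ ≠ c₂ → Disjoint c₁ c₂) ∧
    C.sup id = B ∧
    (∀ c ∈ C, ∀ p : X, ∃! b, b ∈ c ∧ p ∈ b)

open Finset

theorem Finset.card_sup_lt_of_forall_notMem {X : Type*} [Fintype X] [DecidableEq X]
    {S : Finset (Finset X)} {p : X} (hS : ∀ b ∈ S, p ∉ b) :
    (S.sup id).card < Fintype.card X :=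
  card_lt_univ_of_notMem fun hp ↦
    let ⟨b, hb, hpb⟩ := mem_sup.mp hp
    hS b hb hpb

namespace IsAffinePlane

variable {X : Type*} [Fintype X] [DecidableEq X] {s : ℕ} {B : Finset (Finset X)}

theorem pairwiseDisjoint_erase (h : IsAffinePlane s B) (p : X) :
    (↑(B.filter (p ∈ ·)) : Set (Finset X)).PairwiseDisjoint (·.erase p) := by
  intro b hb b' hb' hne
  simp only [coe_filter, Set.mem_ofPred_eq] at hb hb'
  refine disjoint_left.mpr fun x hx hx' ↦ hne ?_
  obtain ⟨hxp, hxb⟩ := mem_erase.mp hx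
  obtain ⟨-, hxb'⟩ := mem_erase.mp hx'
  exact (h.pairs_covered p x (Ne.symm hxp)).unique ⟨hb.1, hb.2, hxb⟩ ⟨hb'.1, hb'.2, hxb'⟩

theorem card_filter_mem_le (h : IsAffinePlane s B) (p : X) :
    (B.filter (p ∈ ·)).card ≤ s + 1 := by
  rcases le_or_gt s 1 with hs | hs
  · calc (B.filter (p ∈ ·)).card ≤ B.card := card_filter_le _ _
      _ = s * (s + 1) := h.card_blocks
      _ ≤ 1 * (s + 1) := Nat.mul_le_mul_right _ hs
      _ = s + 1 := one_mul _
  · refine Nat.le_of_mul_le_mul_right ?_ (Nat.sub_pos_of_lt hs)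
    calc (B.filter (p ∈ ·)).card * (s - 1)
        = ∑ b ∈ B.filter (p ∈ ·), (b.erase p).card := by
          rw [sum_congr rfl fun b hb ↦ ?_, sum_const, smul_eq_mul]
          obtain ⟨hbB, hpb⟩ := mem_filter.mp hb
          rw [card_erase_of_mem hpb, h.block_card b hbB]
      _ = ((B.filter (p ∈ ·)).biUnion (·.erase p)).card :=
          (card_biUnion (h.pairwiseDisjoint_erase p)).symm
      _ ≤ (univ.erase p).card :=
          card_le_card <| biUnion_subset.mpr fun _ _ ↦ erase_subset_erase _ (subset_univ _)
      _ = (s + 1) * (s - 1) := by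
          rw [card_erase_of_mem (mem_univ p), card_univ, h.card_points, ← Nat.sq_sub_sq,
            one_pow]

theorem sq_sub_one_le_card_filter_notMem (h : IsAffinePlane s B) (p : X) :
    s ^ 2 - 1 ≤ (B.filter (p ∉ ·)).card := by
  have hsplit := card_filter_add_card_filter_not (s := B) (p ∈ ·)
  have hthrough := h.card_filter_mem_le p
  rw [h.card_blocks] at hsplit
  have hsq : s ^ 2 - 1 = s * (s + 1) - (s + 1) := by
    rw [← Nat.sub_one_mul, mul_comm, ← Nat.sq_sub_sq, one_pow]
  omega

end IsAffinePlane

/-- In a resolvable affine plane of prime power order `q`, there exist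
`q² - q + 1` distinct blocks whose union contains at most `q² - 1` points. -/
theorem affine_plane_hall_violation {X : Type*} [Fintype X] [DecidableEq X]
    (q : ℕ) (hq : IsPrimePow q) (B : Finset (Finset X))
    (hAP : IsResolvableAffinePlane q B) :
    ∃ S : Finset (Finset X), S ⊆ B ∧ S.card = q ^ 2 - q + 1 ∧
      (S.sup id).card ≤ q ^ 2 - 1 := by
  obtain ⟨hAP, -⟩ := hAP
  have hq2 : 2 ≤ q := hq.two_le
  obtain ⟨p⟩ : Nonempty X := Fintype.card_pos_iff.mp (by rw [hAP.card_points]; positivity)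
  have hcount : q ^ 2 - q + 1 ≤ (B.filter (p ∉ ·)).card := by
    refine le_trans ?_ (hAP.sq_sub_one_le_card_filter_notMem p)
    have : q ≤ q ^ 2 := Nat.le_self_pow two_ne_zero q
    omega
  obtain ⟨S, hSavoid, hScard⟩ := exists_subset_card_eq hcount
  refine ⟨S, hSavoid.trans (filter_subset _ _), hScard, ?_⟩
  have hunion := card_sup_lt_of_forall_notMem fun b hb ↦ (mem_filter.mp (hSavoid hb)).2
  rw [hAP.card_points] at hunion
  omega
end

section
/- Let (P,G,B) be a transversal design TD(3,α) with α > 3. Then for every 1 ≤ i ≤ 4 and every set of i distinct blocks of B, the union of these blocks contains at least i + 2 points. -/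
/-!
Two distinct blocks of a transversal design share at most one point: two common points lie in
different groups (a block meets each group once), and the block through them is unique.
Adding blocks one at a time, the `k`-th new block therefore loses at most `k - 1` of its points
to the earlier ones, so `i` blocks of size 3 cover at least `3i - i(i-1)/2` points, which is
at least `i + 2` for `i ≤ 4`.
-/

namespace Finset

variable {α : Type*} [DecidableEq α]

theorem card_inter_sup_id_le_sum (a : Finset α) (S : Finset (Finset α)) :
    (a ∩ S.sup id).card ≤ ∑ s ∈ S, (a ∩ s).card := by
  rw [sup_eq_biUnion, inter_biUnion]
  exact card_biUnion_le

theorem sum_card_le_card_sup_id_add_choose_two (S : Finset (Finset α))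
    (hS : (S : Set (Finset α)).Pairwise fun s t => (s ∩ t).card ≤ 1) :
    ∑ s ∈ S, s.card ≤ (S.sup id).card + S.card.choose 2 := by
  induction S using Finset.induction with
  | empty => simp
  | @insert a S ha ih =>
    rw [coe_insert, Set.pairwise_insert] at hS
    have hinter : (a ∩ S.sup id).card ≤ S.card :=
      calc (a ∩ S.sup id).card ≤ ∑ s ∈ S, (a ∩ s).card := card_inter_sup_id_le_sum a S
        _ ≤ ∑ _s ∈ S, 1 :=
          sum_le_sum fun s hs => (hS.2 s hs fun h => ha (h ▸ hs)).1
        _ = S.card := by simp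
    have hunion := card_union_add_card_inter a (S.sup id)
    rw [sum_insert ha, sup_insert, id_eq, sup_eq_union,
      card_insert_of_notMem ha, Nat.choose_succ_left _ _ (by norm_num),
      Nat.choose_one_right]
    have hS_bound := ih hS.1
    omega

end Finset

theorem IsTransversalDesign.card_inter_le_one_s17 {P : Type*} [Fintype P] [DecidableEq P]
    {ℓ h : ℕ} {Gr B : Finset (Finset P)} (hTD : IsTransversalDesign ℓ h Gr B)
    {b₁ b₂ : Finset P} (hb₁ : b₁ ∈ B) (hb₂ : b₂ ∈ B) (hne : b₁ ≠ b₂) :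
    (b₁ ∩ b₂).card ≤ 1 := by
  by_contra! hcon
  obtain ⟨p, hp, q, hq, hpq⟩ := Finset.one_lt_card.mp hcon
  rw [Finset.mem_inter] at hp hq
  obtain ⟨g₁, hg₁, hpg₁⟩ := hTD.groups_cover p
  obtain ⟨g₂, hg₂, hqg₂⟩ := hTD.groups_cover q
  have hgne : g₁ ≠ g₂ := by
    rintro rfl
    have hpq_mem : 1 < (b₁ ∩ g₁).card := Finset.one_lt_card.mpr
      ⟨p, Finset.mem_inter.mpr ⟨hp.1, hpg₁⟩, q, Finset.mem_inter.mpr ⟨hq.1, hqg₂⟩, hpq⟩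
    exact hpq_mem.ne' (hTD.block_meets_group b₁ hb₁ g₁ hg₁)
  obtain ⟨b, -, hb_unique⟩ := hTD.pairs_covered p q g₁ hg₁ g₂ hg₂ hgne hpg₁ hqg₂
  exact hne ((hb_unique b₁ ⟨hb₁, hp.1, hq.1⟩).trans (hb_unique b₂ ⟨hb₂, hp.2, hq.2⟩).symm)

theorem td3_deficiency_hall_general {P : Type*} [Fintype P] [DecidableEq P]
    (α : ℕ) (Gr B : Finset (Finset P))
    (hTD : IsTransversalDesign 3 α Gr B) :
    ∀ S : Finset (Finset P), S ⊆ B → 1 ≤ S.card → S.card ≤ 4 →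
      S.card + 2 ≤ (S.sup id).card := by
  intro S hSB h1 h4
  have hlinear : (S : Set (Finset P)).Pairwise fun s t => (s ∩ t).card ≤ 1 :=
    fun s hs t ht hst => hTD.card_inter_le_one_s17 (hSB hs) (hSB ht) hst
  have hbound := S.sum_card_le_card_sup_id_add_choose_two hlinear
  rw [Finset.sum_const_nat fun b hb => hTD.block_card b (hSB hb)] at hbound
  interval_cases hn : S.card <;> simp [Nat.choose] at hbound <;> omega

/-- In a `TD(3,α)` with `α > 3`, any `i` distinct blocks, `1 ≤ i ≤ 4`,
cover at least `i + 2` points. -/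
theorem td3_deficiency_hall {P : Type*} [Fintype P] [DecidableEq P]
    (α : ℕ) (hα : 3 < α) (Gr B : Finset (Finset P))
    (hTD : IsTransversalDesign 3 α Gr B) :
    ∀ S : Finset (Finset P), S ⊆ B → 1 ≤ S.card → S.card ≤ 4 →
      S.card + 2 ≤ (S.sup id).card :=
  td3_deficiency_hall_general α Gr B hTD
end

section
/- Let (P,G,B) be a transversal design TD(3,α) with α ≥ 6. Then there exists a set of 2α − 1 distinct blocks of B whose union contains at most 2α points. -/
/-! Take subsets `A₁, A₂` of size `α - 2` of two groups. Each of the `(α - 2)²` blocks through a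
point of `A₁` and a point of `A₂` meets the third group in exactly one point, so some four points
`Y` of the third group lie on at least `4(α - 2)²/α ≥ 2α - 1` of these blocks, all of which are
contained in `A₁ ∪ A₂ ∪ Y`, a set of at most `2α` points. -/

open Finset

theorem Finset.exists_subset_card_eq_mul_sum_le {ι R : Type*} [DecidableEq ι]
    [CommSemiring R] [LinearOrder R] [IsOrderedRing R] (s : Finset ι) (f : ι → R) {k : ℕ}
    (hk : k ≤ s.card) :
    ∃ t ⊆ s, t.card = k ∧ (k : R) * ∑ i ∈ s, f i ≤ s.card * ∑ i ∈ t, f i := by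
  induction s using Finset.strongInduction with
  | H s ih =>
    rcases hk.eq_or_lt with rfl | hlt
    · exact ⟨s, subset_rfl, rfl, le_rfl⟩
    -- Discarding a minimiser of `f` cannot lower the average.
    obtain ⟨x, hx, hmin⟩ := s.exists_min_image f (card_pos.mp (by omega))
    have hcard : (s.erase x).card + 1 = s.card := card_erase_add_one hx
    obtain ⟨t, hts, htk, hsum⟩ := ih (s.erase x) (erase_ssubset hx) (by omega)
    have hft : (k : R) * f x ≤ ∑ i ∈ t, f i := by
      rw [← htk, ← nsmul_eq_mul]
      exact card_nsmul_le_sum _ _ _ fun i hi => hmin i (mem_of_mem_erase (hts hi))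
    refine ⟨t, hts.trans (erase_subset _ _), htk, ?_⟩
    calc (k : R) * ∑ i ∈ s, f i = k * ∑ i ∈ s.erase x, f i + k * f x := by
          rw [← add_sum_erase s f hx]; ring
      _ ≤ (s.erase x).card * ∑ i ∈ t, f i + ∑ i ∈ t, f i := add_le_add hsum hft
      _ = s.card * ∑ i ∈ t, f i := by rw [← hcard]; push_cast; ring

theorem le_of_four_mul_sub_two_sq_le {α n : ℕ} (hα : 6 ≤ α)
    (h : 4 * ((α - 2) * (α - 2)) ≤ α * n) : 2 * α - 1 ≤ n := by
  obtain ⟨γ, rfl⟩ : ∃ γ, α = γ + 6 := ⟨α - 6, by omega⟩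
  rw [show γ + 6 - 2 = γ + 4 by omega] at h
  by_contra! hn
  have : n ≤ 2 * γ + 10 := by omega
  nlinarith

namespace IsTransversalDesign

variable {P : Type*} [Fintype P] [DecidableEq P] {ℓ h : ℕ} {Gr B : Finset (Finset P)}
  {b : Finset P} {g : Finset P}

theorem eq_of_mem_inter (hTD : IsTransversalDesign ℓ h Gr B) (hb : b ∈ B) (hg : g ∈ Gr)
    {p q : P} (hp : p ∈ b ∩ g) (hq : q ∈ b ∩ g) : p = q :=
  card_le_one.mp (hTD.block_meets_group b hb g hg).le p hp q hq

theorem inter_subset_of_meets (hTD : IsTransversalDesign ℓ h Gr B) (hb : b ∈ B)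
    (hg : g ∈ Gr) {A : Finset P} (hA : A ⊆ g) (hmeet : (b ∩ A).Nonempty) : b ∩ g ⊆ A := by
  obtain ⟨q, hq⟩ := hmeet
  rw [mem_inter] at hq
  intro p hp
  rw [hTD.eq_of_mem_inter hb hg hp (mem_inter.mpr ⟨hq.1, hA hq.2⟩)]
  exact hq.2

theorem subset_union_of_meets (hTD : IsTransversalDesign ℓ h Gr B) {g₁ g₂ g₃ : Finset P}
    (hGr : Gr = {g₁, g₂, g₃}) (hb : b ∈ B) {A₁ A₂ A₃ : Finset P}
    (hA₁ : A₁ ⊆ g₁) (hA₂ : A₂ ⊆ g₂) (hA₃ : A₃ ⊆ g₃) (hm₁ : (b ∩ A₁).Nonempty)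
    (hm₂ : (b ∩ A₂).Nonempty) (hm₃ : (b ∩ A₃).Nonempty) : b ⊆ A₁ ∪ A₂ ∪ A₃ := by
  intro p hp
  obtain ⟨g, hg, hpg⟩ := hTD.groups_cover p
  have hpbg : p ∈ b ∩ g := mem_inter.mpr ⟨hp, hpg⟩
  have hg' := hg
  rw [hGr, mem_insert, mem_insert, mem_singleton] at hg'
  rcases hg' with rfl | rfl | rfl
  · exact mem_union_left _ (mem_union_left _ (hTD.inter_subset_of_meets hb hg hA₁ hm₁ hpbg))
  · exact mem_union_left _ (mem_union_right _ (hTD.inter_subset_of_meets hb hg hA₂ hm₂ hpbg))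
  · exact mem_union_right _ (hTD.inter_subset_of_meets hb hg hA₃ hm₃ hpbg)

theorem card_mul_card_le_card_filter_meets (hTD : IsTransversalDesign ℓ h Gr B)
    {g₁ g₂ : Finset P} (hg₁ : g₁ ∈ Gr) (hg₂ : g₂ ∈ Gr) (hne : g₁ ≠ g₂) {A₁ A₂ : Finset P}
    (hA₁ : A₁ ⊆ g₁) (hA₂ : A₂ ⊆ g₂) :
    A₁.card * A₂.card ≤ (B.filter fun b => (b ∩ A₁).Nonempty ∧ (b ∩ A₂).Nonempty).card := by
  have hex : ∀ pq ∈ A₁ ×ˢ A₂, ∃ b, b ∈ B ∧ pq.1 ∈ b ∧ pq.2 ∈ b := fun pq hpq =>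
    (hTD.pairs_covered _ _ g₁ hg₁ g₂ hg₂ hne (hA₁ (mem_product.mp hpq).1)
      (hA₂ (mem_product.mp hpq).2)).exists
  choose! blk hblkB hblk₁ hblk₂ using hex
  rw [← card_product]
  refine card_le_card_of_injOn blk (fun pq hpq => ?_) (fun pq hpq pq' hpq' heq => ?_)
  · obtain ⟨hp, hq⟩ := mem_product.mp hpq
    exact mem_filter.mpr ⟨hblkB pq hpq, ⟨_, mem_inter.mpr ⟨hblk₁ pq hpq, hp⟩⟩,
      ⟨_, mem_inter.mpr ⟨hblk₂ pq hpq, hq⟩⟩⟩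
  · simp only [coe_product, Set.mem_prod, mem_coe] at hpq hpq'
    have h₁ := hblk₁ pq (mem_product.mpr hpq)
    have h₂ := hblk₂ pq (mem_product.mpr hpq)
    rw [heq] at h₁ h₂
    have hB := hblkB pq' (mem_product.mpr hpq')
    exact Prod.ext
      (hTD.eq_of_mem_inter hB hg₁ (mem_inter.mpr ⟨h₁, hA₁ hpq.1⟩)
        (mem_inter.mpr ⟨hblk₁ pq' (mem_product.mpr hpq'), hA₁ hpq'.1⟩))
      (hTD.eq_of_mem_inter hB hg₂ (mem_inter.mpr ⟨h₂, hA₂ hpq.2⟩)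
        (mem_inter.mpr ⟨hblk₂ pq' (mem_product.mpr hpq'), hA₂ hpq'.2⟩))

theorem card_filter_meets_eq_sum (hTD : IsTransversalDesign ℓ h Gr B) {S : Finset (Finset P)}
    (hS : S ⊆ B) (hg : g ∈ Gr) {Y : Finset P} (hY : Y ⊆ g) :
    (S.filter fun b => (b ∩ Y).Nonempty).card = ∑ y ∈ Y, (S.filter fun b => y ∈ b).card := by
  have hunion : (S.filter fun b => (b ∩ Y).Nonempty) = Y.biUnion fun y => S.filter (y ∈ ·) := by
    ext b
    simp only [mem_filter, mem_biUnion, Finset.Nonempty, mem_inter]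
    tauto
  rw [hunion, card_biUnion]
  intro y hy z hz hyz
  refine disjoint_left.mpr fun b hby hbz => hyz ?_
  rw [mem_filter] at hby hbz
  exact hTD.eq_of_mem_inter (hS hby.1) hg (mem_inter.mpr ⟨hby.2, hY hy⟩)
    (mem_inter.mpr ⟨hbz.2, hY hz⟩)

theorem sum_card_filter_mem_eq_card (hTD : IsTransversalDesign ℓ h Gr B)
    {S : Finset (Finset P)} (hS : S ⊆ B) (hg : g ∈ Gr) :
    ∑ y ∈ g, (S.filter fun b => y ∈ b).card = S.card := by
  rw [← hTD.card_filter_meets_eq_sum hS hg subset_rfl, filter_true_of_mem]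
  intro b hb
  exact card_pos.mp (by rw [hTD.block_meets_group b (hS hb) g hg]; exact one_pos)

end IsTransversalDesign

/-- In a `TD(3,α)` with `α ≥ 6`, there exist `2α - 1` distinct blocks whose
union contains at most `2α` points. -/
theorem td3_deficiency_hall_violation {P : Type*} [Fintype P] [DecidableEq P]
    (α : ℕ) (hα : 6 ≤ α) (Gr B : Finset (Finset P))
    (hTD : IsTransversalDesign 3 α Gr B) :
    ∃ S : Finset (Finset P), S ⊆ B ∧ S.card = 2 * α - 1 ∧
      (S.sup id).card ≤ 2 * α := by
  obtain ⟨g₁, g₂, g₃, h12, -, -, hGr⟩ := card_eq_three.mp hTD.card_groups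
  have hg₁ : g₁ ∈ Gr := by simp [hGr]
  have hg₂ : g₂ ∈ Gr := by simp [hGr]
  have hg₃ : g₃ ∈ Gr := by simp [hGr]
  obtain ⟨A₁, hA₁, hA₁c⟩ := exists_subset_card_eq (s := g₁) (n := α - 2)
    (by rw [hTD.group_card g₁ hg₁]; omega)
  obtain ⟨A₂, hA₂, hA₂c⟩ := exists_subset_card_eq (s := g₂) (n := α - 2)
    (by rw [hTD.group_card g₂ hg₂]; omega)
  set T := B.filter fun b => (b ∩ A₁).Nonempty ∧ (b ∩ A₂).Nonempty
  have hTB : T ⊆ B := filter_subset _ _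
  have hT : (α - 2) * (α - 2) ≤ T.card := by
    simpa only [hA₁c, hA₂c] using hTD.card_mul_card_le_card_filter_meets hg₁ hg₂ h12 hA₁ hA₂
  obtain ⟨Y, hY, hYc, hYsum⟩ := g₃.exists_subset_card_eq_mul_sum_le
    (fun y => (T.filter fun b => y ∈ b).card) (k := 4) (by rw [hTD.group_card g₃ hg₃]; omega)
  rw [hTD.sum_card_filter_mem_eq_card hTB hg₃, hTD.group_card g₃ hg₃,
    ← hTD.card_filter_meets_eq_sum hTB hg₃ hY] at hYsum
  obtain ⟨S, hS, hSc⟩ := exists_subset_card_eq (le_of_four_mul_sub_two_sq_le hα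
    (by exact_mod_cast (Nat.mul_le_mul_left 4 hT).trans hYsum))
  refine ⟨S, fun b hb => hTB (mem_filter.mp (hS hb)).1, hSc, ?_⟩
  have hcover : S.sup id ⊆ A₁ ∪ A₂ ∪ Y := Finset.sup_le fun b hb => by
    obtain ⟨hbT, hm₃⟩ := mem_filter.mp (hS hb)
    obtain ⟨hbB, hm₁, hm₂⟩ := mem_filter.mp hbT
    exact hTD.subset_union_of_meets hGr hbB hA₁ hA₂ hY hm₁ hm₂ hm₃
  calc (S.sup id).card ≤ (A₁ ∪ A₂ ∪ Y).card := card_le_card hcover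
    _ ≤ (A₁ ∪ A₂).card + Y.card := card_union_le _ _
    _ ≤ A₁.card + A₂.card + Y.card := by gcongr; exact card_union_le _ _
    _ ≤ 2 * α := by omega
end
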